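/- arXiv:1701.04993 — 3 statements merged into one kernel-verified Lean document; each statement's English description precedes it below -/
import Mathlib

section
/- Let a_1, …, a_n be integers (indexed by a finite set of size n) and let 1 ≤ k ≤ n. Then ∑_{p} ∏_{i=1}^{k} |p_i|^{ℓ(p_i)-1} = C(n-1, k-1) · (a_1 + ⋯ + a_n)^{n-k}, where the sum is over all set partitions p of the index set {1,…,n} into exactly k nonempty blocks p_1,…,p_k, |p_i| = ∑_{j ∈ p_i} a_j, and ℓ(p_i) is the cardinality of the block p_i. -/
open Finset

open Polynomial

namespace Stmt6Aux

variable {ι : Type*} [DecidableEq ι]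

/-- Sum of weights over a finset. -/
def W (z : ι → ℤ) (s : Finset ι) : ℤ := ∑ i ∈ s, z i

/-- Abel-type polynomial attached to a finset. -/
noncomputable def A (z : ι → ℤ) (s : Finset ι) : ℤ[X] :=
  if s = ∅ then 1 else X * (X + C (W z s)) ^ (s.card - 1)

lemma A_empty (z : ι → ℤ) : A z (∅ : Finset ι) = 1 := by simp [A]

lemma A_of_nonempty (z : ι → ℤ) {s : Finset ι} (hs : s.Nonempty) :
    A z s = X * (X + C (W z s)) ^ (s.card - 1) := by
  rw [A, if_neg hs.ne_empty]

lemma W_erase {z : ι → ℤ} {s : Finset ι} {i : ι} (hi : i ∈ s) :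
    z i + W z (s.erase i) = W z s := Finset.add_sum_erase s z hi

lemma derivative_A (z : ι → ℤ) (s : Finset ι) :
    derivative (A z s) = ∑ i ∈ s, (A z (s.erase i)).comp (X + C (z i)) := by
  rcases s.eq_empty_or_nonempty with rfl | hs
  · simp [A_empty]
  rcases Nat.lt_or_ge s.card 2 with h2 | h2
  · -- card = 1
    have h1 : s.card = 1 := le_antisymm (by omega) hs.card_pos
    obtain ⟨a, rfl⟩ := Finset.card_eq_one.1 h1
    simp [A_of_nonempty z hs, A_empty]
  · -- card ≥ 2
    obtain ⟨m, hm⟩ : ∃ m, s.card = m + 2 := ⟨s.card - 2, by omega⟩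
    rw [A_of_nonempty z hs]
    have step : ∀ i ∈ s, (A z (s.erase i)).comp (X + C (z i))
        = (X + C (z i)) * (X + C (W z s)) ^ m := by
      intro i hi
      have hne : (s.erase i).Nonempty := by
        rw [← Finset.card_pos, Finset.card_erase_of_mem hi]; omega
      rw [A_of_nonempty z hne, Finset.card_erase_of_mem hi, hm]
      simp only [mul_comp, X_comp, pow_comp, add_comp, C_comp]
      rw [show m + 2 - 1 - 1 = m from rfl]
      congr 2
      rw [add_assoc, ← C_add, W_erase hi]
    rw [Finset.sum_congr rfl step, derivative_mul, derivative_X,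
      derivative_X_add_C_pow, ← Finset.sum_mul, Finset.sum_add_distrib]
    rw [Finset.sum_const, ← map_sum C]
    have : (∑ i ∈ s, z i) = W z s := rfl
    rw [this, hm]
    rw [show m + 2 - 1 = m + 1 from rfl]
    push_cast [map_natCast]
    rw [nsmul_eq_mul]
    simp only [C_add, C_1, map_natCast]
    push_cast
    ring

lemma pair_swap {β : Type*} [AddCommMonoid β] (M : Finset ι) (f : ι → Finset ι → β) :
    ∑ T ∈ M.powerset, ∑ i ∈ M \ T, f i T
      = ∑ i ∈ M, ∑ T ∈ (M.erase i).powerset, f i T := by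
  rw [Finset.sum_sigma', Finset.sum_sigma']
  refine Finset.sum_bij' (fun x _ => ⟨x.2, x.1⟩) (fun x _ => ⟨x.2, x.1⟩) ?_ ?_ ?_ ?_ ?_
  · rintro ⟨T, i⟩ hx
    simp only [Finset.mem_sigma, Finset.mem_powerset, Finset.mem_sdiff] at hx ⊢
    exact ⟨hx.2.1, Finset.subset_erase.2 ⟨hx.1, hx.2.2⟩⟩
  · rintro ⟨i, T⟩ hx
    simp only [Finset.mem_sigma, Finset.mem_powerset, Finset.mem_sdiff,
      Finset.subset_erase] at hx ⊢
    exact ⟨hx.2.1, hx.1, hx.2.2⟩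
  · rintro ⟨T, i⟩ _; rfl
  · rintro ⟨i, T⟩ _; rfl
  · rintro ⟨T, i⟩ _; rfl

lemma sdiff_erase_comm {M T : Finset ι} {i : ι} (hT : T ⊆ M.erase i) :
    (M \ T).erase i = (M.erase i) \ T := by
  ext x
  simp only [Finset.mem_erase, Finset.mem_sdiff]
  tauto



lemma H1 (z : ι → ℤ) (y : ℤ) (M : Finset ι) :
    ∑ T ∈ M.powerset, C ((y + W z T) ^ T.card) * A z (M \ T)
      = (X + C (y + W z M)) ^ M.card := by
  induction M using Finset.strongInduction with
  | _ M ih =>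
  have key : derivative (∑ T ∈ M.powerset, C ((y + W z T) ^ T.card) * A z (M \ T))
      = derivative ((X + C (y + W z M)) ^ M.card) := by
    rw [map_sum]
    simp only [derivative_C_mul, derivative_A, Finset.mul_sum]
    rw [pair_swap M
      (fun i T => C ((y + W z T) ^ T.card) * (A z ((M \ T).erase i)).comp (X + C (z i)))]
    have step : ∀ i ∈ M, (∑ T ∈ (M.erase i).powerset,
        C ((y + W z T) ^ T.card) * (A z ((M \ T).erase i)).comp (X + C (z i)))
        = (X + C (y + W z M)) ^ (M.card - 1) := by
      intro i hi
      have hcongr : ∀ T ∈ (M.erase i).powerset,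
          C ((y + W z T) ^ T.card) * (A z ((M \ T).erase i)).comp (X + C (z i))
          = (C ((y + W z T) ^ T.card) * A z ((M.erase i) \ T)).comp (X + C (z i)) := by
        intro T hT
        rw [sdiff_erase_comm (Finset.mem_powerset.1 hT), mul_comp, C_comp]
      rw [Finset.sum_congr rfl hcongr, ← Polynomial.sum_comp,
        ih _ (Finset.erase_ssubset hi), pow_comp, add_comp, X_comp, C_comp,
        Finset.card_erase_of_mem hi]
      rw [show X + C (z i) + C (y + W z (M.erase i)) = X + C (y + W z M) by
        rw [add_assoc, ← C_add, show z i + (y + W z (M.erase i)) = y + W z M by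
          rw [← W_erase hi]; ring]]
    rw [Finset.sum_congr rfl step, Finset.sum_const, derivative_X_add_C_pow,
      nsmul_eq_mul]
    simp [map_natCast]
  have h0 : (∑ T ∈ M.powerset, C ((y + W z T) ^ T.card) * A z (M \ T)).coeff 0
      = ((X + C (y + W z M)) ^ M.card).coeff 0 := by
    rw [finset_sum_coeff, Finset.sum_eq_single_of_mem M (Finset.mem_powerset_self M)]
    · rw [Finset.sdiff_self, A_empty, mul_one, coeff_C_zero,
        coeff_X_add_C_pow]
      simp
    · intro T hT hne
      have hne' : (M \ T).Nonempty := by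
        rw [Finset.sdiff_nonempty]
        intro h
        exact hne (Finset.Subset.antisymm (Finset.mem_powerset.1 hT) h)
      rw [A_of_nonempty z hne', mul_coeff_zero, mul_coeff_zero]
      simp
  have hd : derivative ((∑ T ∈ M.powerset, C ((y + W z T) ^ T.card) * A z (M \ T))
      - (X + C (y + W z M)) ^ M.card) = 0 := by
    rw [map_sub, key, sub_self]
  have hC := Polynomial.eq_C_of_derivative_eq_zero hd
  rw [coeff_sub, h0, sub_self, map_zero] at hC
  exact sub_eq_zero.1 hC

lemma avoid_parts_of_mem {u : Finset ι} (P : Finpartition u) {B : Finset ι}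
    (hB : B ∈ P.parts) : (P.avoid B).parts = P.parts.erase B := by
  ext c
  rw [Finpartition.mem_avoid, Finset.mem_erase]
  constructor
  · rintro ⟨d, hd, hdB, rfl⟩
    have hne : d ≠ B := fun h => hdB (h ▸ le_refl _)
    have hdisj : Disjoint d B := P.disjoint hd hB hne
    rw [Finset.sdiff_eq_self_of_disjoint hdisj]
    exact ⟨hne, hd⟩
  · rintro ⟨hne, hc⟩
    refine ⟨c, hc, fun hle => ?_, Finset.sdiff_eq_self_of_disjoint (P.disjoint hc hB hne)⟩
    exact P.bot_notMem ((disjoint_self.1 ((P.disjoint hc hB hne).mono_right hle)) ▸ hc)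

lemma avoid_extend {u B : Finset ι} (Q : Finpartition (u \ B)) (hb : B ≠ ⊥)
    (hab : Disjoint (u \ B) B) (hc : (u \ B) ⊔ B = u) :
    (Q.extend hb hab hc).avoid B = Q := by
  have hBmem : B ∈ (Q.extend hb hab hc).parts := by
    rw [Finpartition.extend_parts]; exact Finset.mem_insert_self _ _
  have hBnot : B ∉ Q.parts := by
    intro hQ
    exact hb (disjoint_self.1 (hab.mono_left (Q.le hQ)))
  ext c
  rw [avoid_parts_of_mem _ hBmem, Finpartition.extend_parts,
    Finset.erase_insert hBnot]


lemma pair_eq {u : Finset ι} (a : ι) {B : Finset ι} (Q : Finpartition (u \ B))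
    (hb : B ≠ ⊥) (hab : Disjoint (u \ B) B) (hc : (u \ B) ⊔ B = u) (haB : a ∈ B) :
    (⟨(Q.extend hb hab hc).part a,
        (Q.extend hb hab hc).avoid ((Q.extend hb hab hc).part a)⟩
      : Σ B : Finset ι, Finpartition (u \ B)) = ⟨B, Q⟩ := by
  have h1 : (Q.extend hb hab hc).part a = B :=
    Finpartition.part_eq_of_mem _
      (by rw [Finpartition.extend_parts]; exact Finset.mem_insert_self _ _) haB
  have h2 : ∀ (Bc : Finset ι) (_ : (Q.extend hb hab hc).part a = Bc),
      (⟨(Q.extend hb hab hc).part a,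
          (Q.extend hb hab hc).avoid ((Q.extend hb hab hc).part a)⟩
        : Σ B : Finset ι, Finpartition (u \ B))
        = ⟨Bc, (Q.extend hb hab hc).avoid Bc⟩ := by
    rintro _ rfl; rfl
  rw [h2 B h1, avoid_extend]


lemma main (z : ι → ℤ) (u : Finset ι) :
    ∑ P : Finpartition u,
        (X : ℤ[X]) ^ P.parts.card * C (∏ b ∈ P.parts, W z b ^ (b.card - 1))
      = A z u := by
  induction u using Finset.strongInduction with
  | _ u ih =>
  rcases u.eq_empty_or_nonempty with rfl | hu
  · have hparts : ∀ P : Finpartition (∅ : Finset ι), P.parts = ∅ := by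
      intro P
      refine Finset.eq_empty_of_forall_notMem fun b hb => ?_
      have hb' : b = ⊥ := by simpa using Finset.subset_empty.1 (P.le hb)
      exact P.bot_notMem (hb' ▸ hb)
    have hone : ∀ P : Finpartition (∅ : Finset ι),
        (X : ℤ[X]) ^ P.parts.card * C (∏ b ∈ P.parts, W z b ^ (b.card - 1)) = 1 := by
      intro P; simp [hparts P]
    haveI : Unique (Finpartition (∅ : Finset ι)) :=
      Finset.bot_eq_empty (α := ι) ▸ inferInstance
    rw [Finset.sum_congr rfl fun P _ => hone P, Finset.sum_const, A_empty]
    simp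
  obtain ⟨a, ha⟩ := hu
  have decomp : ∑ P : Finpartition u,
      (X : ℤ[X]) ^ P.parts.card * C (∏ b ∈ P.parts, W z b ^ (b.card - 1))
      = ∑ x ∈ (u.powerset.filter (fun B => a ∈ B)).sigma
          (fun B => (Finset.univ : Finset (Finpartition (u \ B)))),
          (X : ℤ[X]) ^ (insert x.1 x.2.parts).card
            * C (∏ b ∈ insert x.1 x.2.parts, W z b ^ (b.card - 1)) := by
    refine Finset.sum_bij' (fun P _ => ⟨P.part a, P.avoid (P.part a)⟩)
      (fun x hx => x.2.extend
        (by
          have hx' := (Finset.mem_filter.1 (Finset.mem_sigma.1 hx).1).2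
          exact fun h => by simp [h, Finset.bot_eq_empty] at hx'
          )
        Finset.sdiff_disjoint
        (by
          have hx' := Finset.mem_powerset.1
            (Finset.mem_filter.1 (Finset.mem_sigma.1 hx).1).1
          rw [Finset.sup_eq_union, Finset.sdiff_union_of_subset hx']))
      ?_ ?_ ?_ ?_ ?_
    · intro P _
      rw [Finset.mem_sigma]
      refine ⟨Finset.mem_filter.2 ⟨Finset.mem_powerset.2 (P.le (P.part_mem.2 ha)),
        P.mem_part ha⟩, Finset.mem_univ _⟩
    · intro x hx
      exact Finset.mem_univ _
    · intro P _
      ext c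
      rw [Finpartition.extend_parts, avoid_parts_of_mem P (P.part_mem.2 ha),
        Finset.insert_erase (P.part_mem.2 ha)]
    · rintro ⟨B, Q⟩ hx
      have haB : a ∈ B := (Finset.mem_filter.1 (Finset.mem_sigma.1 hx).1).2
      exact pair_eq a Q _ _ _ haB
    · intro P _
      rw [avoid_parts_of_mem P (P.part_mem.2 ha), Finset.insert_erase (P.part_mem.2 ha)]
  rw [decomp, Finset.sum_sigma]
  have inner : ∀ B ∈ u.powerset.filter (fun B => a ∈ B),
      (∑ Q : Finpartition (u \ B),
        (X : ℤ[X]) ^ (insert B Q.parts).card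
          * C (∏ b ∈ insert B Q.parts, W z b ^ (b.card - 1)))
      = X * C (W z B ^ (B.card - 1)) * A z (u \ B) := by
    intro B hB
    have haB : a ∈ B := (Finset.mem_filter.1 hB).2
    have hsub : B ⊆ u := Finset.mem_powerset.1 (Finset.mem_filter.1 hB).1
    have hnot : ∀ Q : Finpartition (u \ B), B ∉ Q.parts := by
      intro Q hQ
      have := Q.le hQ haB
      rw [Finset.mem_sdiff] at this
      exact this.2 haB
    have hterm : ∀ Q : Finpartition (u \ B),
        (X : ℤ[X]) ^ (insert B Q.parts).card
          * C (∏ b ∈ insert B Q.parts, W z b ^ (b.card - 1))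
        = (X * C (W z B ^ (B.card - 1)))
            * ((X : ℤ[X]) ^ Q.parts.card * C (∏ b ∈ Q.parts, W z b ^ (b.card - 1))) := by
      intro Q
      rw [Finset.card_insert_of_notMem (hnot Q), Finset.prod_insert (hnot Q),
        pow_succ, C_mul]
      ring
    rw [Finset.sum_congr rfl fun Q _ => hterm Q, ← Finset.mul_sum,
      ih (u \ B) (Finset.sdiff_ssubset hsub ⟨a, haB⟩)]
  rw [Finset.sum_congr rfl inner]
  have reindex : ∑ B ∈ u.powerset.filter (fun B => a ∈ B),
      X * C (W z B ^ (B.card - 1)) * A z (u \ B)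
      = ∑ T ∈ (u.erase a).powerset,
          X * C ((z a + W z T) ^ T.card) * A z ((u.erase a) \ T) := by
    refine Finset.sum_bij' (fun B _ => B.erase a) (fun T _ => insert a T) ?_ ?_ ?_ ?_ ?_
    · intro B hB
      exact Finset.mem_powerset.2 (Finset.erase_subset_erase a
        (Finset.mem_powerset.1 (Finset.mem_filter.1 hB).1))
    · intro T hT
      have hT' := Finset.mem_powerset.1 hT
      refine Finset.mem_filter.2 ⟨Finset.mem_powerset.2 ?_, Finset.mem_insert_self _ _⟩
      exact Finset.insert_subset ha (hT'.trans (Finset.erase_subset _ _))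
    · intro B hB
      exact Finset.insert_erase (Finset.mem_filter.1 hB).2
    · intro T hT
      exact Finset.erase_insert fun h =>
        (Finset.mem_erase.1 (Finset.mem_powerset.1 hT h)).1 rfl
    · intro B hB
      have haB : a ∈ B := (Finset.mem_filter.1 hB).2
      have e1 : z a + W z (B.erase a) = W z B := W_erase haB
      have e2 : (B.erase a).card = B.card - 1 := Finset.card_erase_of_mem haB
      have e3 : (u.erase a) \ (B.erase a) = u \ B := by
        ext x
        simp only [Finset.mem_sdiff, Finset.mem_erase]
        constructor
        · rintro ⟨⟨hxa, hxu⟩, hx⟩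
          exact ⟨hxu, fun hxB => hx ⟨hxa, hxB⟩⟩
        · rintro ⟨hxu, hxB⟩
          exact ⟨⟨fun h => hxB (h ▸ haB), hxu⟩, fun h => hxB h.2⟩
      rw [e1, e2, e3]
  rw [reindex]
  simp only [mul_assoc]
  rw [← Finset.mul_sum, H1 z (z a) (u.erase a)]
  rw [A_of_nonempty z ⟨a, ha⟩, Finset.card_erase_of_mem ha, W_erase ha]

end Stmt6Aux


open Stmt6Aux

theorem stmt_6 (n k : ℕ) (hk : 1 ≤ k) (hkn : k ≤ n) (a : Fin n → ℤ) :
    ∑ p ∈ Finset.univ.filter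
        (fun p : Finpartition (Finset.univ : Finset (Fin n)) => p.parts.card = k),
        ∏ b ∈ p.parts, (∑ j ∈ b, a j) ^ (b.card - 1) =
      ((n - 1).choose (k - 1) : ℤ) * (∑ j, a j) ^ (n - k) := by
  have hn : 1 ≤ n := hk.trans hkn
  have hcard : (Finset.univ : Finset (Fin n)).card = n := by simp
  have hne : (Finset.univ : Finset (Fin n)).Nonempty := by
    rw [← Finset.card_pos, hcard]; omega
  have hmain := congrArg (fun p => Polynomial.coeff p k)
    (main a (Finset.univ : Finset (Fin n)))
  rw [Polynomial.finset_sum_coeff] at hmain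
  have lcoe : ∀ P : Finpartition (Finset.univ : Finset (Fin n)),
      ((Polynomial.X : ℤ[X]) ^ P.parts.card
        * Polynomial.C (∏ b ∈ P.parts, W a b ^ (b.card - 1))).coeff k
      = if P.parts.card = k then ∏ b ∈ P.parts, (∑ j ∈ b, a j) ^ (b.card - 1) else 0 := by
    intro P
    rw [Polynomial.coeff_mul_C, Polynomial.coeff_X_pow]
    have : W a = fun b => ∑ j ∈ b, a j := rfl
    by_cases h : P.parts.card = k
    · simp [h, this]
    · rw [if_neg (show ¬ k = P.parts.card from fun hh => h hh.symm), if_neg h, zero_mul]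
  rw [Finset.sum_congr rfl fun P _ => lcoe P] at hmain
  rw [← Finset.sum_filter] at hmain
  rw [hmain, A_of_nonempty a hne, hcard]
  obtain ⟨k', rfl⟩ : ∃ k', k = k' + 1 := ⟨k - 1, by omega⟩
  rw [Polynomial.coeff_X_mul, Polynomial.coeff_X_add_C_pow]
  have h1 : n - 1 - k' = n - (k' + 1) := by omega
  have h2 : k' + 1 - 1 = k' := rfl
  have h3 : W a Finset.univ = ∑ j, a j := rfl
  rw [h1, h2, h3, mul_comm]
end

section
/- Let b_1, …, b_n be integers (indexed by a finite set of size n) and 1 ≤ k ≤ n. Then ∑_{p} ∏_{i=1}^{k} (|p_i|)_{ℓ(p_i)-1} = C(n-1, k-1) · (b_1+⋯+b_n)_{n-k}, where the sum is over all set partitions p of {1,…,n} into exactly k nonempty blocks, |p_i| = ∑_{j ∈ p_i} b_j, ℓ(p_i) is the size of block p_i, and (x)_m denotes the falling factorial x(x-1)⋯(x-m+1). -/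
open Finset

/-- The falling factorial `(x)_m = x (x-1) ⋯ (x-m+1)`, with `(x)_0 = 1`. -/
def fallingFactorial (x : ℤ) (m : ℕ) : ℤ := ∏ i ∈ Finset.range m, (x - i)

namespace FFAux

open Polynomial Finset

variable {ι : Type*} [DecidableEq ι]

@[simp] lemma ff_zero (x : ℤ) : fallingFactorial x 0 = 1 := by simp [fallingFactorial]

lemma ff_succ (x : ℤ) (m : ℕ) :
    fallingFactorial x (m + 1) = fallingFactorial x m * (x - m) := by
  simp [fallingFactorial, Finset.prod_range_succ]

lemma ff_succ' (x : ℤ) (m : ℕ) :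
    fallingFactorial x (m + 1) = x * fallingFactorial (x - 1) m := by
  rw [fallingFactorial, Finset.prod_range_succ']
  simp only [Nat.cast_zero, sub_zero]
  rw [mul_comm]
  congr 1
  apply Finset.prod_congr rfl
  intro i _
  push_cast
  ring

lemma ff_delta (x : ℤ) (m : ℕ) :
    fallingFactorial (x + 1) (m + 1)
      = fallingFactorial x (m + 1) + (m + 1) * fallingFactorial x m := by
  rw [ff_succ' (x + 1) m, add_sub_cancel_right, ff_succ x m]
  ring

lemma ff_concat (x : ℤ) (m l : ℕ) :
    fallingFactorial x (m + l) = fallingFactorial x m * fallingFactorial (x - m) l := by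
  induction l with
  | zero => simp
  | succ l ih =>
      rw [← Nat.add_assoc, ff_succ, ih, ff_succ]
      push_cast
      ring

lemma ff_reflect (u v : ℤ) (m : ℕ) (h : u + v = m - 1) :
    fallingFactorial u m = (-1) ^ m * fallingFactorial v m := by
  have key : ∀ i ∈ Finset.range m, (u - (i : ℤ)) = -1 * (v - ((m - 1 - i : ℕ) : ℤ)) := by
    intro i hi
    rw [Finset.mem_range] at hi
    have : ((m - 1 - i : ℕ) : ℤ) = (m : ℤ) - 1 - i := by omega
    rw [this]
    omega
  calc fallingFactorial u m = ∏ i ∈ Finset.range m, (-1 * (v - ((m - 1 - i : ℕ) : ℤ))) :=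
        Finset.prod_congr rfl key
    _ = (-1) ^ m * ∏ i ∈ Finset.range m, (v - ((m - 1 - i : ℕ) : ℤ)) := by
        rw [Finset.prod_mul_distrib, Finset.prod_const, Finset.card_range]
    _ = (-1) ^ m * fallingFactorial v m := by
        rw [Finset.prod_range_reflect (fun j => v - (j : ℤ)) m]
        rfl

lemma ff_nat_zero_of_lt (a m : ℕ) (h : a < m) : fallingFactorial (a : ℤ) m = 0 := by
  apply Finset.prod_eq_zero (Finset.mem_range.2 h)
  simp

lemma ff_vandermonde (x y : ℤ) (m : ℕ) :
    fallingFactorial (x + y) m =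
      ∑ i ∈ Finset.range (m + 1),
        (m.choose i : ℤ) * fallingFactorial x i * fallingFactorial y (m - i) := by
  induction m with
  | zero => simp
  | succ m ih =>
      rw [ff_succ, ih, Finset.sum_mul]
      have split : ∀ i ∈ Finset.range (m + 1),
          (m.choose i : ℤ) * fallingFactorial x i * fallingFactorial y (m - i) * (x + y - m)
          = (m.choose i : ℤ) * fallingFactorial x (i+1) * fallingFactorial y (m - i)
            + (m.choose i : ℤ) * fallingFactorial x i * fallingFactorial y (m - i + 1) := by
        intro i hi
        rw [Finset.mem_range] at hi
        have hmi : ((m - i : ℕ) : ℤ) = (m : ℤ) - i := by omega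
        rw [ff_succ x i, ff_succ y (m - i), hmi]
        have : x + y - m = (x - i) + (y - ((m : ℤ) - i)) := by ring
        rw [this]
        ring
      rw [Finset.sum_congr rfl split, Finset.sum_add_distrib]
      have h1 : ∑ i ∈ Finset.range (m + 1),
          (m.choose i : ℤ) * fallingFactorial x (i+1) * fallingFactorial y (m - i)
          = ∑ j ∈ Finset.range (m + 2), (if j = 0 then 0 else (m.choose (j-1) : ℤ))
              * fallingFactorial x j * fallingFactorial y (m + 1 - j) := by
        rw [Finset.sum_range_succ' (fun j => (if j = 0 then 0 else (m.choose (j-1) : ℤ))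
              * fallingFactorial x j * fallingFactorial y (m + 1 - j)) (m+1)]
        norm_num
        apply Finset.sum_congr rfl
        intro i hi
        rw [Finset.mem_range] at hi
        congr 2
        omega
      have h2 : ∑ i ∈ Finset.range (m + 1),
          (m.choose i : ℤ) * fallingFactorial x i * fallingFactorial y (m - i + 1)
          = ∑ j ∈ Finset.range (m + 2), (if j = m + 1 then 0 else (m.choose j : ℤ))
              * fallingFactorial x j * fallingFactorial y (m + 1 - j) := by
        rw [Finset.sum_range_succ (fun j => (if j = m + 1 then 0 else (m.choose j : ℤ))
              * fallingFactorial x j * fallingFactorial y (m + 1 - j)) (m+1)]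
        norm_num
        apply Finset.sum_congr rfl
        intro i hi
        rw [Finset.mem_range] at hi
        rw [if_neg (by omega)]
        congr 2
        omega
      rw [h1, h2, ← Finset.sum_add_distrib]
      apply Finset.sum_congr rfl
      intro j hj
      rw [Finset.mem_range] at hj
      have hch : (((m+1).choose j : ℕ) : ℤ)
          = (if j = 0 then 0 else (m.choose (j-1) : ℤ))
            + (if j = m + 1 then 0 else (m.choose j : ℤ)) := by
        rcases Nat.eq_zero_or_pos j with rfl | hjpos
        · simp
        · rcases Nat.lt_or_ge j (m+1) with hlt | hge
          · rw [if_neg (by omega), if_neg (by omega)]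
            obtain ⟨j', rfl⟩ : ∃ j', j = j' + 1 := ⟨j - 1, by omega⟩
            rw [Nat.choose_succ_succ]
            push_cast
            simp
          · have : j = m + 1 := by omega
            subst this
            rw [if_pos rfl, if_neg (by omega)]
            simp
      rw [hch]
      ring


lemma ff_delta' (z : ℤ) (m : ℕ) :
    fallingFactorial (z + 1) m = fallingFactorial z m + m * fallingFactorial z (m - 1) := by
  cases m with
  | zero => simp
  | succ m => simpa using ff_delta z m

lemma ff_pred_zero (m : ℕ) (hm : 1 ≤ m) : fallingFactorial ((m : ℤ) - 1) m = 0 := by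
  have h : ((m - 1 : ℕ) : ℤ) = (m : ℤ) - 1 := by omega
  rw [← h]
  exact ff_nat_zero_of_lt _ _ (by omega)

lemma ff_nat_pos (j : ℕ) : 0 < fallingFactorial (j : ℤ) j := by
  rw [fallingFactorial]
  apply Finset.prod_pos
  intro i hi
  rw [Finset.mem_range] at hi
  omega

lemma vanish (b : ι → ℤ) :
    ∀ (d : Finset ι) (g : Polynomial ℤ), g.natDegree + 1 ≤ d.card →
      ∑ c ∈ d.powerset, (-1 : ℤ) ^ c.card * g.eval (∑ j ∈ c, b j) = 0 := by
  intro d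
  induction d using Finset.induction_on with
  | empty => intro g hg; simp at hg
  | @insert a d ha ih =>
      intro g hg
      rw [Finset.card_insert_of_notMem ha] at hg
      have hdisj : Disjoint d.powerset (d.powerset.image (insert a)) := by
        rw [Finset.disjoint_left]
        intro c hc hc2
        obtain ⟨c', _, rfl⟩ := Finset.mem_image.1 hc2
        exact ha (Finset.mem_powerset.1 hc (Finset.mem_insert_self a c'))
      have hinj : ∀ c1 ∈ d.powerset, ∀ c2 ∈ d.powerset,
          insert a c1 = insert a c2 → c1 = c2 := by
        intro c1 h1 c2 h2 hq
        have e1 : (insert a c1).erase a = c1 :=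
          Finset.erase_insert (fun hc => ha (Finset.mem_powerset.1 h1 hc))
        have e2 : (insert a c2).erase a = c2 :=
          Finset.erase_insert (fun hc => ha (Finset.mem_powerset.1 h2 hc))
        rw [← e1, ← e2, hq]
      rw [Finset.powerset_insert, Finset.sum_union hdisj, Finset.sum_image hinj,
        ← Finset.sum_add_distrib]
      set h : Polynomial ℤ := g - g.comp (X + C (b a)) with hh_def
      have hterm : ∀ c ∈ d.powerset,
          (-1 : ℤ) ^ c.card * g.eval (∑ j ∈ c, b j)
            + (-1 : ℤ) ^ (insert a c).card * g.eval (∑ j ∈ insert a c, b j)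
          = (-1 : ℤ) ^ c.card * h.eval (∑ j ∈ c, b j) := by
        intro c hc
        have hac : a ∉ c := fun hac => ha (Finset.mem_powerset.1 hc hac)
        rw [Finset.card_insert_of_notMem hac, Finset.sum_insert hac]
        simp only [hh_def, eval_sub, eval_comp, eval_add, eval_X, eval_C]
        rw [pow_succ, add_comm (b a) (∑ j ∈ c, b j)]
        ring
      rw [Finset.sum_congr rfl hterm]
      by_cases hzero : h = 0
      · simp [hzero]
      · apply ih h
        have hg0 : g.natDegree ≠ 0 := by
          intro h0
          obtain ⟨c0, rfl⟩ := Polynomial.natDegree_eq_zero.1 h0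
          exact hzero (by simp [hh_def])
        have hgne : g ≠ 0 := fun h0 => hg0 (by simp [h0])
        have hcompdeg : (g.comp (X + C (b a))).natDegree = g.natDegree := by
          rw [Polynomial.natDegree_comp, Polynomial.natDegree_X_add_C, mul_one]
        have hcompne : g.comp (X + C (b a)) ≠ 0 := by
          intro h0
          rw [h0] at hcompdeg
          simp at hcompdeg
          exact hg0 hcompdeg.symm
        have hlead : (g.comp (X + C (b a))).leadingCoeff = g.leadingCoeff := by
          rw [Polynomial.leadingCoeff_comp (by rw [Polynomial.natDegree_X_add_C]; exact one_ne_zero)]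
          rw [Polynomial.leadingCoeff_X_add_C, one_pow, mul_one]
        have hdlt : h.degree < g.degree := by
          apply Polynomial.degree_sub_lt _ hgne hlead.symm
          rw [Polynomial.degree_eq_natDegree hgne, Polynomial.degree_eq_natDegree hcompne, hcompdeg]
        have := Polynomial.natDegree_lt_natDegree hzero hdlt
        omega


/-- `Q b c x = x * (x + w(c) - 1)_{|c|-1}` for nonempty `c`, and `1` for `c = ∅`. -/
def Q (b : ι → ℤ) (c : Finset ι) (x : ℤ) : ℤ :=
  if c = ∅ then 1 else x * fallingFactorial (x + (∑ j ∈ c, b j) - 1) (c.card - 1)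

@[simp] lemma Q_empty (b : ι → ℤ) (x : ℤ) : Q b ∅ x = 1 := by simp [Q]

lemma Q_of_ne (b : ι → ℤ) {c : Finset ι} (hc : c ≠ ∅) (x : ℤ) :
    Q b c x = x * fallingFactorial (x + (∑ j ∈ c, b j) - 1) (c.card - 1) := by
  simp [Q, hc]

lemma key (b : ι → ℤ) (d : Finset ι) : ∀ (x y : ℤ),
    ∑ c ∈ d.powerset, Q b c x * fallingFactorial (y + ∑ j ∈ d \ c, b j) (d \ c).card
      = fallingFactorial (x + y + ∑ j ∈ d, b j) d.card := by
  induction d using Finset.strongInduction with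
  | _ d ih =>
    intro x y
    rcases Finset.eq_empty_or_nonempty d with rfl | hd
    · simp [ff_zero]
    have hℓ : 1 ≤ d.card := Finset.card_pos.2 hd
    -- Difference step for the left side
    have hΔL : ∀ z : ℤ,
        ∑ c ∈ d.powerset, Q b c x
            * fallingFactorial ((z + 1) + ∑ j ∈ d \ c, b j) (d \ c).card
        = (∑ c ∈ d.powerset, Q b c x
            * fallingFactorial (z + ∑ j ∈ d \ c, b j) (d \ c).card)
          + (d.card : ℤ) * fallingFactorial (x + z + ∑ j ∈ d, b j) (d.card - 1) := by
      intro z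
      have expand : ∀ c ∈ d.powerset,
          Q b c x * fallingFactorial ((z + 1) + ∑ j ∈ d \ c, b j) ((d \ c).card)
          = Q b c x * fallingFactorial (z + ∑ j ∈ d \ c, b j) ((d \ c).card)
            + Q b c x * (((d \ c).card : ℤ)
                * fallingFactorial (z + ∑ j ∈ d \ c, b j) ((d \ c).card - 1)) := by
        intro c _
        have h1 : (z + 1) + ∑ j ∈ d \ c, b j = (z + ∑ j ∈ d \ c, b j) + 1 := by ring
        rw [h1, ff_delta']
        ring
      rw [Finset.sum_congr rfl expand, Finset.sum_add_distrib]
      congr 1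
      have inner : ∀ c ∈ d.powerset,
          Q b c x * (((d \ c).card : ℤ)
              * fallingFactorial (z + ∑ j ∈ d \ c, b j) ((d \ c).card - 1))
          = ∑ t ∈ d \ c, Q b c x
              * fallingFactorial ((z + b t) + ∑ j ∈ (d.erase t) \ c, b j)
                  ((d.erase t \ c).card) := by
        intro c _
        have congr1 : ∀ t ∈ d \ c,
            Q b c x * fallingFactorial ((z + b t) + ∑ j ∈ (d.erase t) \ c, b j)
                ((d.erase t \ c).card)
            = Q b c x * fallingFactorial (z + ∑ j ∈ d \ c, b j) ((d \ c).card - 1) := by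
          intro t ht
          rw [Finset.erase_sdiff_comm, Finset.card_erase_of_mem ht]
          have hsum := Finset.add_sum_erase (d \ c) b ht
          have harg : (z + b t) + ∑ j ∈ (d \ c).erase t, b j = z + ∑ j ∈ d \ c, b j := by
            linarith [hsum]
          rw [harg]
        rw [Finset.sum_congr rfl congr1, Finset.sum_const, nsmul_eq_mul]
        ring
      rw [Finset.sum_congr rfl inner]
      rw [Finset.sum_comm' (s := d.powerset) (t := fun c => d \ c) (t' := d)
        (s' := fun t => (d.erase t).powerset) ?hmem]
      case hmem =>
        intro c t
        simp only [Finset.mem_powerset, Finset.mem_sdiff, Finset.subset_erase]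
        tauto
      have inner2 : ∀ t ∈ d,
          ∑ c ∈ (d.erase t).powerset, Q b c x
              * fallingFactorial ((z + b t) + ∑ j ∈ (d.erase t) \ c, b j)
                  ((d.erase t \ c).card)
          = fallingFactorial (x + z + ∑ j ∈ d, b j) (d.card - 1) := by
        intro t ht
        rw [ih (d.erase t) (Finset.erase_ssubset ht) x (z + b t)]
        have hsum := Finset.add_sum_erase d b ht
        have harg : x + (z + b t) + ∑ j ∈ d.erase t, b j = x + z + ∑ j ∈ d, b j := by
          linarith [hsum]
        rw [harg, Finset.card_erase_of_mem ht]
      rw [Finset.sum_congr rfl inner2, Finset.sum_const, nsmul_eq_mul]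
    -- Difference step for the right side
    have hΔR : ∀ z : ℤ,
        fallingFactorial (x + (z + 1) + ∑ j ∈ d, b j) d.card
        = fallingFactorial (x + z + ∑ j ∈ d, b j) d.card
          + (d.card : ℤ) * fallingFactorial (x + z + ∑ j ∈ d, b j) (d.card - 1) := by
      intro z
      have h1 : x + (z + 1) + ∑ j ∈ d, b j = (x + z + ∑ j ∈ d, b j) + 1 := by ring
      rw [h1, ff_delta']
    -- Base point
    set y₀ : ℤ := (d.card : ℤ) - 1 - x - ∑ j ∈ d, b j with hy₀
    have hbase :
        ∑ c ∈ d.powerset, Q b c x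
            * fallingFactorial (y₀ + ∑ j ∈ d \ c, b j) (d \ c).card
        = fallingFactorial (x + y₀ + ∑ j ∈ d, b j) d.card := by
      have hRHS : fallingFactorial (x + y₀ + ∑ j ∈ d, b j) d.card = 0 := by
        have harg : x + y₀ + ∑ j ∈ d, b j = (d.card : ℤ) - 1 := by rw [hy₀]; ring
        rw [harg]
        exact ff_pred_zero d.card hℓ
      rw [hRHS]
      set g : Polynomial ℤ := ∏ i ∈ Finset.range (d.card - 1), (X + C (x - 1 - (i : ℤ)))
        with hg
      have hgeval : ∀ u : ℤ, g.eval u = fallingFactorial (x + u - 1) (d.card - 1) := by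
        intro u
        rw [hg, Polynomial.eval_prod, fallingFactorial]
        apply Finset.prod_congr rfl
        intro i _
        simp only [Polynomial.eval_add, Polynomial.eval_X, Polynomial.eval_C]
        ring
      have hgdeg : g.natDegree + 1 ≤ d.card := by
        have h1 : g.natDegree ≤ ∑ i ∈ Finset.range (d.card - 1),
            (X + C (x - 1 - (i : ℤ))).natDegree := Polynomial.natDegree_prod_le _ _
        have h2 : ∀ i ∈ Finset.range (d.card - 1),
            (X + C (x - 1 - (i : ℤ))).natDegree = 1 := by
          intro i _
          exact Polynomial.natDegree_X_add_C _
        rw [Finset.sum_congr rfl h2, Finset.sum_const, Finset.card_range, smul_eq_mul,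
          mul_one] at h1
        omega
      have hterm : ∀ c ∈ d.powerset,
          Q b c x * fallingFactorial (y₀ + ∑ j ∈ d \ c, b j) (d \ c).card
          = (x * (-1) ^ d.card) * ((-1) ^ c.card * g.eval (∑ j ∈ c, b j)) := by
        intro c hc
        have hcd := Finset.mem_powerset.1 hc
        have hwcomp : ∑ j ∈ d \ c, b j = (∑ j ∈ d, b j) - ∑ j ∈ c, b j :=
          Finset.sum_sdiff_eq_sub hcd
        have hcard : (d \ c).card = d.card - c.card := Finset.card_sdiff_of_subset hcd
        have hcle : c.card ≤ d.card := Finset.card_le_card hcd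
        rw [hgeval, hwcomp, hcard]
        by_cases hcE : c = ∅
        · subst hcE
          simp only [Q_empty, Finset.sum_empty, Finset.card_empty, pow_zero,
            Nat.sub_zero, one_mul, sub_zero]
          have harg : y₀ + ∑ j ∈ d, b j = ((d.card : ℤ)) - 1 - x := by rw [hy₀]; ring
          rw [harg]
          have hrefl : fallingFactorial ((d.card : ℤ) - 1 - x) d.card
              = (-1) ^ d.card * fallingFactorial x d.card :=
            ff_reflect _ _ _ (by ring)
          rw [hrefl]
          obtain ⟨m, hm⟩ : ∃ m, d.card = m + 1 := ⟨d.card - 1, by omega⟩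
          rw [hm, ff_succ']
          have : m + 1 - 1 = m := by omega
          rw [this]
          ring
        · have hc1 : 1 ≤ c.card := Finset.card_pos.2 (Finset.nonempty_iff_ne_empty.2 hcE)
          rw [Q_of_ne b hcE]
          have harg : y₀ + ((∑ j ∈ d, b j) - ∑ j ∈ c, b j)
              = (((d.card - c.card : ℕ)) : ℤ) - 1 - (x + (∑ j ∈ c, b j) - c.card) := by
            rw [hy₀]
            push_cast [hcle]
            ring
          rw [harg]
          have hrefl : fallingFactorial
              ((((d.card - c.card : ℕ)) : ℤ) - 1 - (x + (∑ j ∈ c, b j) - c.card))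
              (d.card - c.card)
              = (-1) ^ (d.card - c.card)
                * fallingFactorial (x + (∑ j ∈ c, b j) - c.card) (d.card - c.card) :=
            ff_reflect _ _ _ (by ring)
          rw [hrefl]
          have hconcat : fallingFactorial (x + (∑ j ∈ c, b j) - 1) (d.card - 1)
              = fallingFactorial (x + (∑ j ∈ c, b j) - 1) (c.card - 1)
                * fallingFactorial (x + (∑ j ∈ c, b j) - c.card) (d.card - c.card) := by
            have hsplit : d.card - 1 = (c.card - 1) + (d.card - c.card) := by omega
            rw [hsplit, ff_concat]
            congr 2
            push_cast [hc1]
            ring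
          have hsign : ((-1 : ℤ)) ^ (d.card - c.card)
              = (-1) ^ d.card * (-1) ^ c.card := by
            have h1 : ((-1 : ℤ)) ^ (d.card - c.card) * (-1) ^ c.card = (-1) ^ d.card := by
              rw [← pow_add]
              congr 1
              omega
            have h2 : ((-1 : ℤ)) ^ c.card * (-1) ^ c.card = 1 := by
              rw [← mul_pow]
              norm_num
            calc ((-1 : ℤ)) ^ (d.card - c.card)
                = ((-1 : ℤ)) ^ (d.card - c.card) * (((-1 : ℤ)) ^ c.card * (-1) ^ c.card) := by
                  rw [h2, mul_one]
              _ = (-1) ^ d.card * (-1) ^ c.card := by rw [← mul_assoc, h1]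
          rw [hsign, hconcat]
          ring
      rw [Finset.sum_congr rfl hterm, ← Finset.mul_sum]
      rw [vanish b d g hgdeg, mul_zero]
    -- combine
    have hstep : ∀ z : ℤ,
        (∑ c ∈ d.powerset, Q b c x
            * fallingFactorial ((z + 1) + ∑ j ∈ d \ c, b j) (d \ c).card)
          - fallingFactorial (x + (z + 1) + ∑ j ∈ d, b j) d.card
        = (∑ c ∈ d.powerset, Q b c x
            * fallingFactorial (z + ∑ j ∈ d \ c, b j) (d \ c).card)
          - fallingFactorial (x + z + ∑ j ∈ d, b j) d.card := by
      intro z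
      rw [hΔL z, hΔR z]
      ring
    have hall : ∀ u : ℤ,
        ∑ c ∈ d.powerset, Q b c x
            * fallingFactorial ((y₀ + u) + ∑ j ∈ d \ c, b j) (d \ c).card
        = fallingFactorial (x + (y₀ + u) + ∑ j ∈ d, b j) d.card := by
      intro u
      induction u using Int.induction_on with
      | zero => simpa using hbase
      | succ k ihk =>
          have h := hstep (y₀ + (k : ℤ))
          have e : y₀ + ((k : ℤ) + 1) = (y₀ + (k : ℤ)) + 1 := by ring
          rw [e]
          linarith [h, ihk]
      | pred k ihk =>
          have h := hstep (y₀ + (-(k : ℤ) - 1))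
          have e1 : y₀ + (-(k : ℤ) - 1) + 1 = y₀ + -(k : ℤ) := by ring
          rw [e1] at h
          linarith [h, ihk]
    have := hall (y - y₀)
    have e : y₀ + (y - y₀) = y := by ring
    rw [e] at this
    exact this


lemma conv (b : ι → ℤ) (d : Finset ι) (x y : ℤ) :
    ∑ c ∈ d.powerset, Q b c x * Q b (d \ c) y = Q b d (x + y) := by
  rcases Finset.eq_empty_or_nonempty d with rfl | hd
  · simp
  obtain ⟨t, ht⟩ := hd
  have hins : insert t (d.erase t) = d := Finset.insert_erase ht
  have htd' : t ∉ d.erase t := Finset.notMem_erase t d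
  rw [← hins]
  have hdisj : Disjoint (d.erase t).powerset ((d.erase t).powerset.image (insert t)) := by
    rw [Finset.disjoint_left]
    intro c hc hc2
    obtain ⟨c', _, rfl⟩ := Finset.mem_image.1 hc2
    exact htd' (Finset.mem_powerset.1 hc (Finset.mem_insert_self t c'))
  have hinj : ∀ c1 ∈ (d.erase t).powerset, ∀ c2 ∈ (d.erase t).powerset,
      insert t c1 = insert t c2 → c1 = c2 := by
    intro c1 h1 c2 h2 hq
    have e1 : (insert t c1).erase t = c1 :=
      Finset.erase_insert (fun hc => htd' (Finset.mem_powerset.1 h1 hc))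
    have e2 : (insert t c2).erase t = c2 :=
      Finset.erase_insert (fun hc => htd' (Finset.mem_powerset.1 h2 hc))
    rw [← e1, ← e2, hq]
  rw [Finset.powerset_insert, Finset.sum_union hdisj, Finset.sum_image hinj]
  have hsum1 : ∀ c ∈ (d.erase t).powerset,
      Q b c x * Q b (insert t (d.erase t) \ c) y
      = Q b c x * (y * fallingFactorial ((y + b t - 1) + ∑ j ∈ d.erase t \ c, b j)
          ((d.erase t \ c).card)) := by
    intro c hc
    have hcd := Finset.mem_powerset.1 hc
    have htc : t ∉ c := fun h => htd' (hcd h)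
    rw [Finset.insert_sdiff_of_notMem _ htc]
    have hne : insert t (d.erase t \ c) ≠ ∅ := Finset.insert_ne_empty _ _
    rw [Q_of_ne b hne]
    have htdc : t ∉ d.erase t \ c := fun h => htd' (Finset.mem_sdiff.1 h).1
    rw [Finset.sum_insert htdc, Finset.card_insert_of_notMem htdc]
    have e1 : y + (b t + ∑ j ∈ d.erase t \ c, b j) - 1
        = (y + b t - 1) + ∑ j ∈ d.erase t \ c, b j := by ring
    have e2 : (d.erase t \ c).card + 1 - 1 = (d.erase t \ c).card := by omega
    rw [e1, e2]
  have hsum2 : ∀ c ∈ (d.erase t).powerset,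
      Q b (insert t c) x * Q b (insert t (d.erase t) \ insert t c) y
      = (x * fallingFactorial ((x + b t - 1) + ∑ j ∈ c, b j) c.card) * Q b (d.erase t \ c) y := by
    intro c hc
    have hcd := Finset.mem_powerset.1 hc
    have htc : t ∉ c := fun h => htd' (hcd h)
    have hE : insert t (d.erase t) \ insert t c = d.erase t \ c := by
      rw [Finset.insert_sdiff_insert]
      ext j
      simp only [Finset.mem_sdiff, Finset.mem_insert]
      constructor
      · rintro ⟨h1, h2⟩
        exact ⟨h1, fun hj => h2 (Or.inr hj)⟩
      · rintro ⟨h1, h2⟩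
        exact ⟨h1, fun hj => by
          rcases hj with rfl | hj
          · exact htd' h1
          · exact h2 hj⟩
    rw [hE]
    have hne : insert t c ≠ ∅ := Finset.insert_ne_empty _ _
    rw [Q_of_ne b hne, Finset.sum_insert htc, Finset.card_insert_of_notMem htc]
    have e1 : x + (b t + ∑ j ∈ c, b j) - 1 = (x + b t - 1) + ∑ j ∈ c, b j := by ring
    have e2 : c.card + 1 - 1 = c.card := by omega
    rw [e1, e2]
  rw [Finset.sum_congr rfl hsum1, Finset.sum_congr rfl hsum2]
  -- first sum via key directly
  have h1 : ∑ c ∈ (d.erase t).powerset,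
      Q b c x * (y * fallingFactorial ((y + b t - 1) + ∑ j ∈ d.erase t \ c, b j)
        ((d.erase t \ c).card))
      = y * fallingFactorial (x + y + b t - 1 + ∑ j ∈ d.erase t, b j) (d.erase t).card := by
    have e : x + y + b t - 1 + ∑ j ∈ d.erase t, b j
        = x + (y + b t - 1) + ∑ j ∈ d.erase t, b j := by ring
    rw [e, ← key b (d.erase t) x (y + b t - 1), Finset.mul_sum]
    apply Finset.sum_congr rfl
    intro c _
    ring
  -- second sum: reindex by complement then key
  have h2 : ∑ c ∈ (d.erase t).powerset,
      (x * fallingFactorial ((x + b t - 1) + ∑ j ∈ c, b j) c.card) * Q b (d.erase t \ c) y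
      = x * fallingFactorial (x + y + b t - 1 + ∑ j ∈ d.erase t, b j) (d.erase t).card := by
    have hreindex : ∑ c ∈ (d.erase t).powerset,
        (x * fallingFactorial ((x + b t - 1) + ∑ j ∈ c, b j) c.card) * Q b (d.erase t \ c) y
        = ∑ c ∈ (d.erase t).powerset,
          Q b c y * (x * fallingFactorial ((x + b t - 1) + ∑ j ∈ d.erase t \ c, b j)
            ((d.erase t \ c).card)) := by
      apply Finset.sum_nbij' (i := fun c => d.erase t \ c) (j := fun c => d.erase t \ c)
      · intro c hc
        exact Finset.mem_powerset.2 (Finset.sdiff_subset)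
      · intro c hc
        exact Finset.mem_powerset.2 (Finset.sdiff_subset)
      · intro c hc
        exact Finset.sdiff_sdiff_eq_self (Finset.mem_powerset.1 hc)
      · intro c hc
        exact Finset.sdiff_sdiff_eq_self (Finset.mem_powerset.1 hc)
      · intro c hc
        rw [Finset.sdiff_sdiff_eq_self (Finset.mem_powerset.1 hc)]
        ring
    have e : x + y + b t - 1 + ∑ j ∈ d.erase t, b j
        = y + (x + b t - 1) + ∑ j ∈ d.erase t, b j := by ring
    rw [hreindex, e, ← key b (d.erase t) y (x + b t - 1), Finset.mul_sum]
    apply Finset.sum_congr rfl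
    intro c _
    ring
  rw [h1, h2]
  have hne : insert t (d.erase t) ≠ ∅ := Finset.insert_ne_empty _ _
  rw [Q_of_ne b hne, Finset.sum_insert htd', Finset.card_insert_of_notMem htd']
  have e2 : (d.erase t).card + 1 - 1 = (d.erase t).card := by omega
  have e3 : x + y + (b t + ∑ j ∈ d.erase t, b j) - 1
      = x + y + b t - 1 + ∑ j ∈ d.erase t, b j := by ring
  rw [e2, e3]
  ring


/-- Remove a part from a finpartition. -/
def erasePart {d : Finset ι} (p : Finpartition d) (c : Finset ι) (hc : c ∈ p.parts) :
    Finpartition (d \ c) where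
  parts := p.parts.erase c
  supIndep := p.supIndep.subset (Finset.erase_subset _ _)
  sup_parts := by
    have hdisj : Disjoint c ((p.parts.erase c).sup id) :=
      p.supIndep (Finset.erase_subset _ _) hc (Finset.notMem_erase _ _)
    have h1 : (insert c (p.parts.erase c)).sup id = d := by
      rw [Finset.insert_erase hc, p.sup_parts]
    rw [Finset.sup_insert, id_eq] at h1
    calc (p.parts.erase c).sup id
        = (c ⊔ (p.parts.erase c).sup id) \ c := by
          rw [Finset.sup_eq_union, Finset.union_sdiff_cancel_left hdisj]
      _ = d \ c := by rw [h1]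
  bot_notMem := fun h => p.bot_notMem (Finset.mem_of_mem_erase h)

@[simp] lemma erasePart_parts {d : Finset ι} (p : Finpartition d) (c : Finset ι)
    (hc : c ∈ p.parts) : (erasePart p c hc).parts = p.parts.erase c := rfl

lemma parts_empty (p : Finpartition (∅ : Finset ι)) : p.parts = ∅ := by
  by_contra h
  obtain ⟨c, hc⟩ := Finset.nonempty_iff_ne_empty.2 h
  have h1 : c ⊆ ∅ := p.le hc
  have h2 : c = ∅ := Finset.subset_empty.1 h1
  subst h2
  exact p.bot_notMem hc

/-- `PB b k d = ∑_{partitions p of d} (k)_{#parts} ∏_{c ∈ parts} (w c)_{|c|-1}`. -/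
def PB (b : ι → ℤ) (k : ℕ) (d : Finset ι) : ℤ :=
  ∑ p : Finpartition d, fallingFactorial (k : ℤ) p.parts.card * ∏ c ∈ p.parts, Q b c 1

lemma bridge (b : ι → ℤ) (k : ℕ) (d : Finset ι) :
    ∑ c ∈ d.powerset, Q b c 1 * PB b k (d \ c) = PB b (k + 1) d := by
  -- split off the `c = ∅` term on the left
  have hmem : (∅ : Finset ι) ∈ d.powerset := Finset.empty_mem_powerset d
  rw [← Finset.add_sum_erase _ _ hmem]
  simp only [Q_empty, one_mul, Finset.sdiff_empty]
  -- expand ff on the right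
  have hdelta : ∀ p : Finpartition d,
      fallingFactorial ((k + 1 : ℕ) : ℤ) p.parts.card * ∏ c ∈ p.parts, Q b c 1
      = fallingFactorial (k : ℤ) p.parts.card * ∏ c ∈ p.parts, Q b c 1
        + (fallingFactorial (k : ℤ) (p.parts.card - 1) * ∏ c ∈ p.parts, Q b c 1)
            * p.parts.card := by
    intro p
    have e : ((k + 1 : ℕ) : ℤ) = (k : ℤ) + 1 := by push_cast; ring
    rw [e, ff_delta']
    ring
  conv_rhs => rw [PB]
  rw [Finset.sum_congr rfl (fun p _ => hdelta p), Finset.sum_add_distrib, ← PB]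
  congr 1
  -- now the core bijection
  have hRHS : ∀ p : Finpartition d,
      (fallingFactorial (k : ℤ) (p.parts.card - 1) * ∏ c ∈ p.parts, Q b c 1)
          * p.parts.card
      = ∑ c ∈ p.parts,
          fallingFactorial (k : ℤ) (p.parts.card - 1) * ∏ e ∈ p.parts, Q b e 1 := by
    intro p
    rw [Finset.sum_const, nsmul_eq_mul]
    ring
  rw [Finset.sum_congr rfl (fun p _ => hRHS p)]
  -- convert to sigma sums
  rw [← Finset.sum_sigma (Finset.univ : Finset (Finpartition d)) (fun p => p.parts)
      (fun x => fallingFactorial (k : ℤ) (x.1.parts.card - 1) * ∏ e ∈ x.1.parts, Q b e 1)]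
  have hPBexp : ∀ c ∈ (d.powerset).erase ∅,
      Q b c 1 * PB b k (d \ c)
      = ∑ p' : Finpartition (d \ c),
          Q b c 1 * (fallingFactorial (k : ℤ) p'.parts.card * ∏ e ∈ p'.parts, Q b e 1) := by
    intro c _
    rw [PB, Finset.mul_sum]
  rw [Finset.sum_congr rfl hPBexp]
  rw [← Finset.sum_sigma ((d.powerset).erase ∅)
      (fun c => (Finset.univ : Finset (Finpartition (d \ c))))
      (fun x => Q b x.1 1
        * (fallingFactorial (k : ℤ) x.2.parts.card * ∏ e ∈ x.2.parts, Q b e 1))]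
  -- the bijection
  refine Finset.sum_bij'
    (i := fun (x : Σ c : Finset ι, Finpartition (d \ c)) (hx) =>
      (⟨x.2.extend (by
          have := (Finset.mem_erase.1 (Finset.mem_sigma.1 hx).1).1
          rwa [Finset.bot_eq_empty])
        (disjoint_sdiff_self_left)
        (by
          rw [Finset.sup_eq_union]
          exact Finset.sdiff_union_of_subset
            (Finset.mem_powerset.1 (Finset.mem_erase.1 (Finset.mem_sigma.1 hx).1).2)), x.1⟩ :
        Σ p : Finpartition d, Finset ι))
    (j := fun (y : Σ p : Finpartition d, Finset ι) (hy) =>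
      ⟨y.2, erasePart y.1 y.2 (Finset.mem_sigma.1 hy).2⟩)
    ?hi ?hj ?left ?right ?hval
  case hi =>
    intro x hx
    rw [Finset.mem_sigma]
    constructor
    · exact Finset.mem_univ _
    · rw [Finpartition.extend_parts]
      exact Finset.mem_insert_self _ _
  case hj =>
    intro y hy
    have hy2 := (Finset.mem_sigma.1 hy).2
    rw [Finset.mem_sigma]
    constructor
    · rw [Finset.mem_erase, Finset.mem_powerset]
      refine ⟨?_, y.1.le hy2⟩
      intro hbot
      exact y.1.bot_notMem (by rw [Finset.bot_eq_empty, ← hbot]; exact hy2)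
    · exact Finset.mem_univ _
  case left =>
    intro x hx
    obtain ⟨c, p'⟩ := x
    have hx1 := Finset.mem_erase.1 (Finset.mem_sigma.1 hx).1
    have hcne : c ≠ ∅ := hx1.1
    have hnotmem : c ∉ p'.parts := by
      intro hmem
      have h1 : c ⊆ d \ c := p'.le hmem
      obtain ⟨a, ha⟩ := Finset.nonempty_iff_ne_empty.2 hcne
      exact (Finset.mem_sdiff.1 (h1 ha)).2 ha
    dsimp only
    refine congrArg (Sigma.mk c) ?_
    apply Finpartition.ext
    rw [erasePart_parts, Finpartition.extend_parts]
    exact Finset.erase_insert hnotmem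
  case right =>
    intro y hy
    obtain ⟨p, c⟩ := y
    have hy2 : c ∈ p.parts := (Finset.mem_sigma.1 hy).2
    dsimp only
    refine congrArg (fun z : Finpartition d => (Sigma.mk z c : (_ : Finpartition d) × Finset ι)) ?_
    apply Finpartition.ext
    rw [Finpartition.extend_parts, erasePart_parts]
    exact Finset.insert_erase hy2
  case hval =>
    intro x hx
    obtain ⟨c, p'⟩ := x
    have hx1 := Finset.mem_erase.1 (Finset.mem_sigma.1 hx).1
    have hcne : c ≠ ∅ := hx1.1
    have hnotmem : c ∉ p'.parts := by
      intro hmem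
      have h1 : c ⊆ d \ c := p'.le hmem
      obtain ⟨a, ha⟩ := Finset.nonempty_iff_ne_empty.2 hcne
      exact (Finset.mem_sdiff.1 (h1 ha)).2 ha
    dsimp only
    rw [Finpartition.extend_parts, Finset.card_insert_of_notMem hnotmem,
      Finset.prod_insert hnotmem]
    have e : p'.parts.card + 1 - 1 = p'.parts.card := by omega
    rw [e]
    ring

lemma PB_eq (b : ι → ℤ) (k : ℕ) (d : Finset ι) : PB b k d = Q b d (k : ℤ) := by
  induction k generalizing d with
  | zero =>
      rcases Finset.eq_empty_or_nonempty d with rfl | hd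
      · haveI : Unique (Finpartition (∅ : Finset ι)) :=
          inferInstanceAs (Unique (Finpartition (⊥ : Finset ι)))
        rw [PB, Fintype.sum_unique]
        rw [parts_empty (default : Finpartition (∅ : Finset ι))]
        simp [ff_zero]
      · have hne : d ≠ ∅ := Finset.nonempty_iff_ne_empty.1 hd
        rw [Q_of_ne b hne]
        rw [PB]
        have hz : ∀ p : Finpartition d,
            fallingFactorial ((0 : ℕ) : ℤ) p.parts.card * ∏ c ∈ p.parts, Q b c 1 = 0 := by
          intro p
          have hcard : p.parts.card ≠ 0 := by
            intro h0
            have hp0 : p.parts = ∅ := Finset.card_eq_zero.1 h0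
            apply hne
            rw [← p.sup_parts, hp0]
            simp
          obtain ⟨m, hm⟩ : ∃ m, p.parts.card = m + 1 := ⟨p.parts.card - 1, by omega⟩
          rw [hm]
          push_cast
          rw [ff_succ']
          ring
        rw [Finset.sum_congr rfl (fun p _ => hz p), Finset.sum_const, smul_zero]
        ring
  | succ k ih =>
      rw [← bridge b k d]
      have hterm : ∀ c ∈ d.powerset, Q b c 1 * PB b k (d \ c)
          = Q b c 1 * Q b (d \ c) (k : ℤ) := by
        intro c _
        rw [ih]
      rw [Finset.sum_congr rfl hterm, conv b d 1 (k : ℤ)]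
      congr 1
      push_cast
      ring


lemma Q_one (b : ι → ℤ) {c : Finset ι} (hc : c ≠ ∅) :
    Q b c 1 = fallingFactorial (∑ j ∈ c, b j) (c.card - 1) := by
  rw [Q_of_ne b hc, one_mul]
  congr 1
  ring

section Main
variable {n : ℕ} (b : Fin n → ℤ)

def Xs (b : Fin n → ℤ) (j : ℕ) : ℤ :=
  ∑ p ∈ Finset.univ.filter
      (fun p : Finpartition (Finset.univ : Finset (Fin n)) => p.parts.card = j),
    ∏ c ∈ p.parts, fallingFactorial (∑ i ∈ c, b i) (c.card - 1)

def Ys (b : Fin n → ℤ) (j : ℕ) : ℤ :=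
  if j = 0 then 0 else ((n - 1).choose (j - 1) : ℤ) * fallingFactorial (∑ i, b i) (n - j)

lemma PB_fiber (k : ℕ) :
    PB b k (Finset.univ : Finset (Fin n))
      = ∑ j ∈ Finset.range (n + 1), fallingFactorial (k : ℤ) j * Xs b j := by
  rw [PB]
  have hmaps : ∀ p : Finpartition (Finset.univ : Finset (Fin n)),
      p ∈ (Finset.univ : Finset (Finpartition (Finset.univ : Finset (Fin n)))) →
      p.parts.card ∈ Finset.range (n + 1) := by
    intro p _
    rw [Finset.mem_range]
    have := p.card_parts_le_card
    rw [Finset.card_univ, Fintype.card_fin] at this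
    omega
  rw [← Finset.sum_fiberwise_of_maps_to hmaps
    (fun p => fallingFactorial (k : ℤ) p.parts.card * ∏ c ∈ p.parts, Q b c 1)]
  apply Finset.sum_congr rfl
  intro j _
  rw [Xs, Finset.mul_sum]
  apply Finset.sum_congr rfl
  intro p hp
  have hpj : p.parts.card = j := (Finset.mem_filter.1 hp).2
  rw [hpj]
  congr 1
  apply Finset.prod_congr rfl
  intro c hc
  rw [Q_one b (Finset.nonempty_iff_ne_empty.1 (p.nonempty_of_mem_parts hc))]

lemma Q_univ (hn : 1 ≤ n) (k : ℕ) :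
    Q b (Finset.univ : Finset (Fin n)) (k : ℤ)
      = (k : ℤ) * fallingFactorial ((k : ℤ) + (∑ i, b i) - 1) (n - 1) := by
  have hne : (Finset.univ : Finset (Fin n)) ≠ ∅ := by
    have hmem : (⟨0, by omega⟩ : Fin n) ∈ (Finset.univ : Finset (Fin n)) := Finset.mem_univ _
    intro h
    rw [h] at hmem
    exact absurd hmem (Finset.notMem_empty _)
  rw [Q_of_ne b hne]
  rw [Finset.card_univ, Fintype.card_fin]

lemma scalar_id (hn : 1 ≤ n) (k : ℕ) :
    (k : ℤ) * fallingFactorial ((k : ℤ) + (∑ i, b i) - 1) (n - 1)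
      = ∑ j ∈ Finset.range (n + 1), fallingFactorial (k : ℤ) j * Ys b j := by
  have e1 : (k : ℤ) + (∑ i, b i) - 1 = ((k : ℤ) - 1) + ∑ i, b i := by ring
  rw [e1, ff_vandermonde ((k : ℤ) - 1) (∑ i, b i) (n - 1), Finset.mul_sum]
  have e2 : n - 1 + 1 = n := by omega
  rw [e2]
  rw [Finset.sum_range_succ' (fun j => fallingFactorial (k : ℤ) j * Ys b j) n]
  have hzero : fallingFactorial (k : ℤ) 0 * Ys b 0 = 0 := by
    rw [Ys]
    simp
  rw [hzero, add_zero]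
  apply Finset.sum_congr rfl
  intro i hi
  rw [Finset.mem_range] at hi
  rw [Ys, if_neg (Nat.succ_ne_zero i)]
  have e3 : i + 1 - 1 = i := by omega
  have e4 : n - (i + 1) = n - 1 - i := by omega
  rw [e3, e4]
  have e5 : fallingFactorial (k : ℤ) (i + 1) = (k : ℤ) * fallingFactorial ((k : ℤ) - 1) i :=
    ff_succ' _ _
  rw [e5]
  ring

lemma Xs_eq_Ys (hn : 1 ≤ n) : ∀ j, j ≤ n → Xs b j = Ys b j := by
  intro j
  induction j using Nat.strong_induction_on with
  | _ j ih =>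
    intro hjn
    have hiden : ∀ k : ℕ, ∑ i ∈ Finset.range (n + 1),
        fallingFactorial (k : ℤ) i * (Xs b i - Ys b i) = 0 := by
      intro k
      have h1 := PB_fiber b k
      have h2 := scalar_id b hn k
      have h3 := PB_eq b k (Finset.univ : Finset (Fin n))
      have h4 := Q_univ b hn k
      have : ∑ i ∈ Finset.range (n + 1), fallingFactorial (k : ℤ) i * Xs b i
          = ∑ i ∈ Finset.range (n + 1), fallingFactorial (k : ℤ) i * Ys b i := by
        rw [← h1, h3, h4, h2]
      calc ∑ i ∈ Finset.range (n + 1), fallingFactorial (k : ℤ) i * (Xs b i - Ys b i)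
          = (∑ i ∈ Finset.range (n + 1), fallingFactorial (k : ℤ) i * Xs b i)
            - ∑ i ∈ Finset.range (n + 1), fallingFactorial (k : ℤ) i * Ys b i := by
            rw [← Finset.sum_sub_distrib]
            apply Finset.sum_congr rfl
            intro i _
            ring
        _ = 0 := by rw [this]; ring
    have hj := hiden j
    rw [Finset.sum_eq_single j ?h0 ?h1] at hj
    case h0 =>
      intro i hi hij
      rcases Nat.lt_or_ge i j with hlt | hge
      · rw [ih i hlt (by omega)]
        ring
      · have : j < i := by omega
        rw [ff_nat_zero_of_lt j i this]
        ring
    case h1 =>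
      intro h
      exact absurd (Finset.mem_range.2 (by omega)) h
    have hpos := ff_nat_pos j
    have := mul_eq_zero.1 hj
    rcases this with h | h
    · omega
    · linarith [h]
end Main

end FFAux

theorem stmt_8 (n k : ℕ) (hk : 1 ≤ k) (hkn : k ≤ n) (b : Fin n → ℤ) :
    ∑ p ∈ Finset.univ.filter
        (fun p : Finpartition (Finset.univ : Finset (Fin n)) => p.parts.card = k),
        ∏ c ∈ p.parts, fallingFactorial (∑ j ∈ c, b j) (c.card - 1) =
      ((n - 1).choose (k - 1) : ℤ) * fallingFactorial (∑ j, b j) (n - k) := by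
  have h := FFAux.Xs_eq_Ys b (le_trans hk hkn) k hkn
  rw [FFAux.Xs, FFAux.Ys, if_neg (by omega : ¬ k = 0)] at h
  exact h
end

section
/- Let a_1, …, a_n be nonnegative integers and 1 ≤ k ≤ n. Then ∑_{p} M(|p_1|+1, …, |p_k|+1) · ∏_{i=1}^{k} M((a_j+1)_{j ∈ p_i}) = C(n-1, k-1) · M(a_1+1, …, a_n+1), where the sum is over all set partitions p of {1,…,n} into exactly k nonempty blocks, |p_i| = ∑_{j ∈ p_i} a_j, and M(c_1,…,c_r) = (c_1+⋯+c_r)!/(c_1!⋯c_r!) denotes the multinomial coefficient. -/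
open Finset

variable {ι : Type*} [DecidableEq ι]


/-- descFactorial Vandermonde -/
lemma desc_vdm (a b m : ℕ) : (a + b).descFactorial m
    = ∑ l ∈ range (m+1), m.choose l * (a.descFactorial l * b.descFactorial (m - l)) := by
  rw [Nat.descFactorial_eq_factorial_mul_choose, Nat.add_choose_eq, Finset.mul_sum,
    Finset.Nat.sum_antidiagonal_eq_sum_range_succ_mk]
  refine Finset.sum_congr rfl fun l hl => ?_
  have hlm : l ≤ m := by simpa [Nat.lt_succ_iff] using hl
  rw [Nat.descFactorial_eq_factorial_mul_choose, Nat.descFactorial_eq_factorial_mul_choose,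
    ← Nat.choose_mul_factorial_mul_factorial hlm]
  ring

/-- subset-choose swap -/
lemma choose_swap (m i j : ℕ) : m.choose i * (m-i).choose j = m.choose j * (m-j).choose i := by
  by_cases h : i + j ≤ m
  · have h1 := Nat.choose_mul (n := m) (k := i + j) (s := i) (Nat.le_add_right _ _)
    have h2 := Nat.choose_mul (n := m) (k := i + j) (s := j) (Nat.le_add_left _ _)
    have h3 : (i+j).choose i = (i+j).choose j := by
      rw [← Nat.choose_symm (Nat.le_add_right _ _)]; congr 1; omega
    rw [show i + j - i = j by omega] at h1
    rw [show i + j - j = i by omega] at h2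
    rw [← h1, ← h2, h3]
  · have hL : m.choose i * (m-i).choose j = 0 := by
      rcases le_or_gt i m with hi | hi
      · have : m - i < j := by omega
        rw [Nat.choose_eq_zero_of_lt this, Nat.mul_zero]
      · rw [Nat.choose_eq_zero_of_lt hi, Nat.zero_mul]
    have hR : m.choose j * (m-j).choose i = 0 := by
      rcases le_or_gt j m with hj | hj
      · have : m - j < i := by omega
        rw [Nat.choose_eq_zero_of_lt this, Nat.mul_zero]
      · rw [Nat.choose_eq_zero_of_lt hj, Nat.zero_mul]
    rw [hL, hR]

lemma final_id (n k t Y : ℕ) (hk : 1 ≤ k) (hkn : k ≤ n) :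
    ∑ l ∈ range (n - 1 + 1), (n-1).choose l *
        ((t.descFactorial l) * ((n - l - 1).choose (k-1) * Y.descFactorial (n - l - k)))
      = (n-1).choose (k-1) * (t + Y).descFactorial (n-k) := by
  have hn : 1 ≤ n := le_trans hk hkn
  rw [show n - 1 + 1 = n from by omega]
  rw [desc_vdm, Finset.mul_sum]
  rw [Finset.sum_subset (Finset.range_subset_range.2 (show n - k + 1 ≤ n by omega))
    (fun l hl hl' => by
      have h1 : n - k < l := by simp only [Finset.mem_range] at hl hl'; omega
      rw [Nat.choose_eq_zero_of_lt h1]; simp)]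
  refine Finset.sum_congr rfl fun l hl => ?_
  symm
  have hswap := choose_swap (n-1) (k-1) l
  rw [show n - 1 - (k-1) = n - k from by omega, show n - 1 - l = n - l - 1 from by omega] at hswap
  rw [show n - l - k = n - k - l from by omega]
  calc (n-1).choose (k-1) * ((n-k).choose l * (t.descFactorial l * Y.descFactorial (n-k-l)))
      = ((n-1).choose (k-1) * (n-k).choose l) * (t.descFactorial l * Y.descFactorial (n-k-l)) := by
        ring
    _ = ((n-1).choose l * (n - l - 1).choose (k-1)) * (t.descFactorial l * Y.descFactorial (n-k-l)) := by
        rw [hswap]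
    _ = (n-1).choose l * (t.descFactorial l * ((n - l - 1).choose (k-1) * Y.descFactorial (n-k-l))) := by
        ring

lemma parts_singletons {s : Finset ι} (π : Finpartition s) (h : π.parts.card = s.card) :
    π = ⊥ := by
  have hsum : ∑ B ∈ π.parts, B.card = s.card := π.sum_card_parts
  have hone : ∀ B ∈ π.parts, B.card = 1 := by
    intro B hB
    by_contra hne
    have h2 : 2 ≤ B.card := by
      have := Finset.card_pos.2 (π.nonempty_of_mem_parts hB); omega
    have hlt : ∑ B ∈ π.parts, 1 < ∑ B ∈ π.parts, B.card := by
      refine Finset.sum_lt_sum (fun C hC => Finset.card_pos.2 (π.nonempty_of_mem_parts hC))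
        ⟨B, hB, by omega⟩
    rw [Finset.sum_const, smul_eq_mul, Nat.mul_one, h, hsum] at hlt
    omega
  apply Finpartition.ext
  rw [Finpartition.parts_bot]
  ext B
  simp only [Finset.mem_map, Function.Embedding.coeFn_mk]
  constructor
  · intro hB
    obtain ⟨b, rfl⟩ := Finset.card_eq_one.1 (hone B hB)
    exact ⟨b, π.le hB (Finset.mem_singleton_self b), rfl⟩
  · rintro ⟨b, hb, rfl⟩
    obtain ⟨c, hc⟩ := Finset.card_eq_one.1 (hone _ ((π.part_mem.2 hb)))
    have hbc : b ∈ ({c} : Finset ι) := hc ▸ π.mem_part hb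
    have : c = b := (Finset.mem_singleton.1 hbc).symm
    rw [← this]
    exact hc ▸ (π.part_mem.2 hb)



def glue' (s R : Finset ι) (hR : R ⊆ s) (a : ι) (ha : a ∈ s) (haR : a ∉ R)
    (π : Finpartition (s \ R)) : Finpartition s where
  parts := insert (π.part a ∪ R) (π.parts.erase (π.part a))
  supIndep := by
    have ha' : a ∈ s \ R := mem_sdiff.2 ⟨ha, haR⟩
    rw [Finset.supIndep_iff_pairwiseDisjoint, coe_insert]
    refine Set.PairwiseDisjoint.insert
      (π.supIndep.pairwiseDisjoint.subset (by simp [Finset.erase_subset])) ?_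
    intro C hC hne
    simp only [Finset.mem_coe, Finset.mem_erase] at hC
    obtain ⟨hCne, hCparts⟩ := hC
    have hdisj1 : Disjoint (π.part a) C :=
      π.supIndep.pairwiseDisjoint ((π.part_mem.2 ha')) hCparts (fun h => hCne h.symm)
    have hCsub : C ⊆ s \ R := π.le hCparts
    have hdisj2 : Disjoint R C := by
      rw [Finset.disjoint_left]; intro y hyR hyC
      exact (Finset.mem_sdiff.1 (hCsub hyC)).2 hyR
    exact Finset.disjoint_union_left.2 ⟨hdisj1, hdisj2⟩
  sup_parts := by
    have ha' : a ∈ s \ R := mem_sdiff.2 ⟨ha, haR⟩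
    apply le_antisymm
    · apply Finset.sup_le
      intro B hB
      rcases Finset.mem_insert.1 hB with rfl | hB
      · exact Finset.union_subset ((π.le ((π.part_mem.2 ha'))).trans (Finset.sdiff_subset)) hR
      · exact (π.le (Finset.mem_of_mem_erase hB)).trans (Finset.sdiff_subset)
    · intro y hy
      rw [Finset.mem_sup]
      by_cases hyR : y ∈ R
      · exact ⟨_, Finset.mem_insert_self _ _, Finset.mem_union_right _ hyR⟩
      · have hy' : y ∈ s \ R := Finset.mem_sdiff.2 ⟨hy, hyR⟩
        rw [← π.sup_parts, Finset.mem_sup] at hy'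
        obtain ⟨B, hB, hyB⟩ := hy'
        by_cases hBa : B = π.part a
        · exact ⟨_, Finset.mem_insert_self _ _, Finset.mem_union_left _ (hBa ▸ hyB)⟩
        · exact ⟨B, Finset.mem_insert_of_mem (Finset.mem_erase.2 ⟨hBa, hB⟩), hyB⟩
  bot_notMem := by
    have ha' : a ∈ s \ R := mem_sdiff.2 ⟨ha, haR⟩
    simp only [Finset.bot_eq_empty, Finset.mem_insert, Finset.mem_erase]
    rintro (h | ⟨-, h⟩)
    · have : a ∈ π.part a ∪ R := Finset.mem_union_left _ (π.mem_part ha')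
      rw [← h] at this; simp at this
    · exact π.bot_notMem h

def unglue' (s R : Finset ι) (a : ι) (π : Finpartition s) (h : R ⊆ π.part a)
    (ha : a ∈ s) (haR : a ∉ R) : Finpartition (s \ R) where
  parts := insert (π.part a \ R) (π.parts.erase (π.part a))
  supIndep := by
    rw [Finset.supIndep_iff_pairwiseDisjoint, coe_insert]
    refine Set.PairwiseDisjoint.insert
      (π.supIndep.pairwiseDisjoint.subset (by simp [Finset.erase_subset])) ?_
    intro C hC hne
    simp only [Finset.mem_coe, Finset.mem_erase] at hC
    obtain ⟨hCne, hCparts⟩ := hC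
    exact Finset.disjoint_of_subset_left (Finset.sdiff_subset)
      (π.supIndep.pairwiseDisjoint ((π.part_mem.2 ha)) hCparts (fun hh => hCne hh.symm))
  sup_parts := by
    apply le_antisymm
    · apply Finset.sup_le
      intro B hB
      rcases Finset.mem_insert.1 hB with rfl | hB
      · intro y hy
        have hy' := Finset.mem_sdiff.1 hy
        exact Finset.mem_sdiff.2 ⟨π.le ((π.part_mem.2 ha)) hy'.1, hy'.2⟩
      · intro y hy
        have hB' := Finset.mem_erase.1 hB
        refine Finset.mem_sdiff.2 ⟨π.le hB'.2 hy, fun hyR => ?_⟩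
        have hya : y ∈ π.part a := h hyR
        have : B = π.part a := π.eq_of_mem_parts hB'.2 ((π.part_mem.2 ha)) hy hya
        exact hB'.1 this
    · intro y hy
      obtain ⟨hys, hyR⟩ := Finset.mem_sdiff.1 hy
      rw [Finset.mem_sup]
      have hy' : y ∈ s := hys
      rw [← π.sup_parts, Finset.mem_sup] at hy'
      obtain ⟨B, hB, hyB⟩ := hy'
      by_cases hBa : B = π.part a
      · exact ⟨_, Finset.mem_insert_self _ _, Finset.mem_sdiff.2 ⟨hBa ▸ hyB, hyR⟩⟩
      · exact ⟨B, Finset.mem_insert_of_mem (Finset.mem_erase.2 ⟨hBa, hB⟩), hyB⟩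
  bot_notMem := by
    simp only [Finset.bot_eq_empty, Finset.mem_insert, Finset.mem_erase]
    rintro (hh | ⟨-, hh⟩)
    · have : a ∈ π.part a \ R := Finset.mem_sdiff.2 ⟨π.mem_part ha, haR⟩
      rw [← hh] at this; simp at this
    · exact π.bot_notMem hh


lemma glue'_parts (s R : Finset ι) (hR : R ⊆ s) (a : ι) (ha : a ∈ s) (haR : a ∉ R)
    (π : Finpartition (s \ R)) :
    (glue' s R hR a ha haR π).parts = insert (π.part a ∪ R) (π.parts.erase (π.part a)) := rfl

lemma unglue'_parts (s R : Finset ι) (a : ι) (π : Finpartition s) (h : R ⊆ π.part a)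
    (ha : a ∈ s) (haR : a ∉ R) :
    (unglue' s R a π h ha haR).parts = insert (π.part a \ R) (π.parts.erase (π.part a)) := rfl

section lemmas
variable {s R : Finset ι} {a : ι}

lemma union_not_mem_erase (ha : a ∈ s) (haR : a ∉ R) (π : Finpartition (s \ R)) :
    π.part a ∪ R ∉ π.parts.erase (π.part a) := by
  intro hmem
  have ha' : a ∈ s \ R := mem_sdiff.2 ⟨ha, haR⟩
  obtain ⟨hne, hparts⟩ := Finset.mem_erase.1 hmem
  exact hne (π.eq_of_mem_parts hparts ((π.part_mem.2 ha'))
    (Finset.mem_union_left _ (π.mem_part ha')) (π.mem_part ha'))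

lemma sdiff_not_mem_erase (ha : a ∈ s) (haR : a ∉ R) (π : Finpartition s) :
    π.part a \ R ∉ π.parts.erase (π.part a) := by
  intro hmem
  obtain ⟨hne, hparts⟩ := Finset.mem_erase.1 hmem
  exact hne (π.eq_of_mem_parts hparts ((π.part_mem.2 ha))
    (Finset.mem_sdiff.2 ⟨π.mem_part ha, haR⟩) (π.mem_part ha))

variable (hR : R ⊆ s) (ha : a ∈ s) (haR : a ∉ R)

lemma glue'_part_a (π : Finpartition (s \ R)) :
    (glue' s R hR a ha haR π).part a = π.part a ∪ R := by
  have ha' : a ∈ s \ R := mem_sdiff.2 ⟨ha, haR⟩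
  apply Finpartition.part_eq_of_mem
  · rw [glue'_parts]; exact Finset.mem_insert_self _ _
  · exact Finset.mem_union_left _ (π.mem_part ha')

lemma glue'_card (π : Finpartition (s \ R)) :
    (glue' s R hR a ha haR π).parts.card = π.parts.card := by
  have ha' : a ∈ s \ R := mem_sdiff.2 ⟨ha, haR⟩
  rw [glue'_parts, Finset.card_insert_of_notMem (union_not_mem_erase ha haR π),
    Finset.card_erase_of_mem ((π.part_mem.2 ha'))]
  have : 0 < π.parts.card := Finset.card_pos.2 ⟨_, (π.part_mem.2 ha')⟩
  omega

lemma glue'_erase (π : Finpartition (s \ R)) :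
    (glue' s R hR a ha haR π).parts.erase ((glue' s R hR a ha haR π).part a)
      = π.parts.erase (π.part a) := by
  rw [glue'_part_a, glue'_parts, Finset.erase_insert (union_not_mem_erase ha haR π)]

lemma unglue'_part_a (π : Finpartition s) (h : R ⊆ π.part a) :
    (unglue' s R a π h ha haR).part a = π.part a \ R := by
  apply Finpartition.part_eq_of_mem
  · rw [unglue'_parts]; exact Finset.mem_insert_self _ _
  · exact Finset.mem_sdiff.2 ⟨π.mem_part ha, haR⟩

lemma glue'_unglue' (π : Finpartition s) (h : R ⊆ π.part a) :
    glue' s R hR a ha haR (unglue' s R a π h ha haR) = π := by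
  apply Finpartition.ext
  rw [glue'_parts, unglue'_part_a ha haR π h, unglue'_parts,
    Finset.erase_insert (sdiff_not_mem_erase ha haR π), Finset.sdiff_union_of_subset h,
    Finset.insert_erase ((π.part_mem.2 ha))]

lemma unglue'_glue' (π : Finpartition (s \ R)) (h : R ⊆ (glue' s R hR a ha haR π).part a) :
    unglue' s R a (glue' s R hR a ha haR π) h ha haR = π := by
  have ha' : a ∈ s \ R := mem_sdiff.2 ⟨ha, haR⟩
  have hdisj : Disjoint (π.part a) R := by
    rw [Finset.disjoint_left]
    intro y hy hyR
    exact (Finset.mem_sdiff.1 (π.le ((π.part_mem.2 ha')) hy)).2 hyR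
  apply Finpartition.ext
  rw [unglue'_parts, glue'_erase, glue'_part_a, Finset.union_sdiff_cancel_right hdisj,
    Finset.insert_erase ((π.part_mem.2 ha'))]

lemma sum_glue' {M : Type*} [AddCommMonoid M] (G : Finpartition s → M) :
    ∑ π ∈ univ.filter (fun π : Finpartition s => R ⊆ π.part a), G π
      = ∑ π' ∈ (univ : Finset (Finpartition (s \ R))), G (glue' s R hR a ha haR π') := by
  refine Finset.sum_bij' (i := fun π hπ => unglue' s R a π (by simpa using hπ) ha haR)
    (j := fun π' _ => glue' s R hR a ha haR π') ?_ ?_ ?_ ?_ ?_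
  · intro π hπ; exact Finset.mem_univ _
  · intro π' hπ'
    simp only [Finset.mem_filter, Finset.mem_univ, true_and]
    rw [glue'_part_a]
    exact Finset.subset_union_right
  · intro π hπ
    exact glue'_unglue' hR ha haR π (by simpa using hπ)
  · intro π' hπ'
    exact unglue'_glue' hR ha haR π' _
  · intro π hπ
    rw [glue'_unglue' hR ha haR π (by simpa using hπ)]
end lemmas

lemma main_count (μ : ℕ) :
    ∀ (s : Finset ι) (x : ι → ℕ) (k : ℕ), 1 ≤ k → k ≤ s.card →
    s.card + ∑ j ∈ s, x j ≤ μ →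
    ∑ π ∈ univ.filter (fun π : Finpartition s => π.parts.card = k),
        ∏ B ∈ π.parts, (∑ j ∈ B, x j).descFactorial (B.card - 1)
      = (s.card - 1).choose (k - 1) * (∑ j ∈ s, x j).descFactorial (s.card - k) := by
  induction μ with
  | zero => intro s x k hk hkn hμ; exfalso; omega
  | succ μ IH =>
    intro s x k hk hkn hμ
    by_cases hz : ∀ j ∈ s, x j = 0
    -- ALL-ZERO CASE
    · have hX : ∑ j ∈ s, x j = 0 := Finset.sum_eq_zero hz
      rcases eq_or_lt_of_le hkn with hkc | hkc
      · -- k = s.card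
        have hfil : univ.filter (fun π : Finpartition s => π.parts.card = k) = {⊥} := by
          ext π
          simp only [Finset.mem_filter, Finset.mem_univ, true_and, Finset.mem_singleton]
          constructor
          · intro hcard; exact parts_singletons π (hkc ▸ hcard)
          · rintro rfl; rw [Finpartition.card_bot]; omega
        rw [hfil, Finset.sum_singleton, hX, ← hkc, Nat.sub_self, Nat.descFactorial_zero,
          Nat.choose_self, Nat.mul_one]
        apply Finset.prod_eq_one
        intro B hB
        rw [Finpartition.parts_bot, Finset.mem_map] at hB
        obtain ⟨b, hb, rfl⟩ := hB
        simp
      · -- k < s.card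
        rw [hX, Nat.descFactorial_of_lt (by omega), Nat.mul_zero]
        apply Finset.sum_eq_zero
        intro π hπ
        have hπk : π.parts.card = k := (Finset.mem_filter.1 hπ).2
        have hex : ∃ B ∈ π.parts, 2 ≤ B.card := by
          by_contra hno
          push_neg at hno
          have hone : ∀ B ∈ π.parts, B.card = 1 := fun B hB => by
            have h1 := Finset.card_pos.2 (π.nonempty_of_mem_parts hB)
            have h2 := hno B hB; omega
          have : ∑ B ∈ π.parts, B.card = π.parts.card := by
            rw [Finset.sum_congr rfl hone, Finset.sum_const, smul_eq_mul, Nat.mul_one]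
          rw [π.sum_card_parts, hπk] at this
          omega
        obtain ⟨B, hB, hB2⟩ := hex
        apply Finset.prod_eq_zero hB
        have hBz : ∑ j ∈ B, x j = 0 := Finset.sum_eq_zero fun j hj => hz j (π.le hB hj)
        rw [hBz, Nat.descFactorial_of_lt (by omega)]
    -- MAIN CASE
    · push_neg at hz
      obtain ⟨a, has, hxa⟩ := hz
      have hn1 : 1 ≤ s.card := le_trans hk hkn
      -- Step A : expand the product over parts using the block containing a
      have stepA : ∀ π : Finpartition s,
          ∏ B ∈ π.parts, (∑ j ∈ B, x j).descFactorial (B.card - 1)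
            = ∑ T ∈ (s.erase a).powerset,
              if T ⊆ π.part a then
                (x a).descFactorial T.card *
                  ((∑ j ∈ (π.part a).erase a, x j).descFactorial
                      (((π.part a).erase a).card - T.card) *
                    ∏ B ∈ π.parts.erase (π.part a),
                      (∑ j ∈ B, x j).descFactorial (B.card - 1))
              else 0 := by
        intro π
        have hpa : π.part a ∈ π.parts := (π.part_mem.2 has)
        have hapa : a ∈ π.part a := π.mem_part has
        rw [← Finset.mul_prod_erase _ _ hpa]
        -- rewrite W (part a) via Vandermonde and powerset sums
        have hWpa : (∑ j ∈ π.part a, x j).descFactorial ((π.part a).card - 1)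
            = ∑ T ∈ ((π.part a).erase a).powerset,
                (x a).descFactorial T.card *
                  (∑ j ∈ (π.part a).erase a, x j).descFactorial
                    (((π.part a).erase a).card - T.card) := by
          rw [← Finset.add_sum_erase _ _ hapa,
            show (π.part a).card - 1 = ((π.part a).erase a).card from
              (Finset.card_erase_of_mem hapa).symm,
            desc_vdm, Finset.sum_powerset]
          refine Finset.sum_congr rfl fun l hl => ?_
          have hc : ∀ T ∈ Finset.powersetCard l ((π.part a).erase a),
              (x a).descFactorial T.card *
                  (∑ j ∈ (π.part a).erase a, x j).descFactorial
                    (((π.part a).erase a).card - T.card)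
                = (x a).descFactorial l *
                  (∑ j ∈ (π.part a).erase a, x j).descFactorial
                    (((π.part a).erase a).card - l) := fun T hT => by
            rw [(Finset.mem_powersetCard.1 hT).2]
          rw [Finset.sum_congr rfl hc, Finset.sum_const, Finset.card_powersetCard, smul_eq_mul]
        rw [hWpa, Finset.sum_mul]
        have hps : ((π.part a).erase a).powerset
            = (s.erase a).powerset.filter (· ⊆ π.part a) := by
          ext T
          simp only [Finset.mem_powerset, Finset.mem_filter, Finset.subset_erase]
          constructor
          · intro ⟨h1, h2⟩
            exact ⟨⟨h1.trans (π.le hpa), h2⟩, h1⟩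
          · intro ⟨⟨h1, h2⟩, h3⟩
            exact ⟨h3, h2⟩
        rw [hps, Finset.sum_filter]
        refine Finset.sum_congr rfl fun T hT => ?_
        by_cases hTpa : T ⊆ π.part a <;> simp [hTpa, Nat.mul_assoc]
      -- rewrite the sum with stepA, then swap sums
      rw [Finset.sum_congr rfl (fun π _ => stepA π), Finset.sum_comm]
      -- Step B/C/D : for each T, contract T into a and apply the induction hypothesis
      have stepT : ∀ T ∈ (s.erase a).powerset,
          (∑ π ∈ univ.filter (fun π : Finpartition s => π.parts.card = k),
            if T ⊆ π.part a then
                (x a).descFactorial T.card *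
                  ((∑ j ∈ (π.part a).erase a, x j).descFactorial
                      (((π.part a).erase a).card - T.card) *
                    ∏ B ∈ π.parts.erase (π.part a),
                      (∑ j ∈ B, x j).descFactorial (B.card - 1))
              else 0)
          = (x a).descFactorial T.card *
              ((s.card - T.card - 1).choose (k-1) *
                (∑ j ∈ s.erase a, x j).descFactorial (s.card - T.card - k)) := by
        intro T hT
        have hTe : T ⊆ s.erase a := Finset.mem_powerset.1 hT
        have hTs : T ⊆ s := hTe.trans (Finset.erase_subset _ _)
        have haT : a ∉ T := fun h => Finset.notMem_erase a s (hTe h)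
        have ha' : a ∈ s \ T := Finset.mem_sdiff.2 ⟨has, haT⟩
        set x'' : ι → ℕ := Function.update x a (∑ j ∈ T, x j) with hx''
        -- rewrite each glued term
        have stepC : ∀ π' : Finpartition (s \ T),
            (if (glue' s T hTs a has haT π').parts.card = k then
              (x a).descFactorial T.card *
                ((∑ j ∈ ((glue' s T hTs a has haT π').part a).erase a, x j).descFactorial
                    ((((glue' s T hTs a has haT π').part a).erase a).card - T.card) *
                  ∏ B ∈ (glue' s T hTs a has haT π').parts.erase
                      ((glue' s T hTs a has haT π').part a),
                    (∑ j ∈ B, x j).descFactorial (B.card - 1))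
              else 0)
            = (if π'.parts.card = k then
                (x a).descFactorial T.card *
                  ∏ B ∈ π'.parts, (∑ j ∈ B, x'' j).descFactorial (B.card - 1)
              else 0) := by
          intro π'
          rw [glue'_card, glue'_erase, glue'_part_a]
          by_cases h2 : π'.parts.card = k
          · rw [if_pos h2, if_pos h2]
            congr 1
            have hpa' : π'.part a ∈ π'.parts := (π'.part_mem.2 ha')
            have hapa' : a ∈ π'.part a := π'.mem_part ha'
            have hpasub : π'.part a ⊆ s \ T := π'.le hpa'
            have hdisj : Disjoint ((π'.part a).erase a) T := by
              rw [Finset.disjoint_left]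
              intro y hy hyT
              exact (Finset.mem_sdiff.1 (hpasub (Finset.mem_of_mem_erase hy))).2 hyT
            have herase : (π'.part a ∪ T).erase a = (π'.part a).erase a ∪ T := by
              rw [Finset.erase_union_distrib, Finset.erase_eq_of_notMem haT]
            have hQ1 : (∑ j ∈ (π'.part a ∪ T).erase a, x j).descFactorial
                  (((π'.part a ∪ T).erase a).card - T.card)
                = (∑ j ∈ π'.part a, x'' j).descFactorial ((π'.part a).card - 1) := by
              rw [herase, Finset.sum_union hdisj, Finset.card_union_of_disjoint hdisj,
                Nat.add_sub_cancel, Finset.card_erase_of_mem hapa']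
              congr 1
              rw [← Finset.add_sum_erase _ _ hapa', hx'', Function.update_self]
              rw [Finset.sum_congr rfl (fun j hj =>
                Function.update_of_ne (Finset.ne_of_mem_erase hj) _ _)]
              exact (Nat.add_comm _ _)
            have hQ2 : ∏ B ∈ π'.parts.erase (π'.part a),
                  (∑ j ∈ B, x j).descFactorial (B.card - 1)
                = ∏ B ∈ π'.parts.erase (π'.part a),
                  (∑ j ∈ B, x'' j).descFactorial (B.card - 1) := by
              refine Finset.prod_congr rfl fun B hB => ?_
              have hBmem := Finset.mem_of_mem_erase hB
              have hBne := Finset.ne_of_mem_erase hB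
              have haB : a ∉ B := fun haB =>
                hBne (π'.eq_of_mem_parts hBmem hpa' haB hapa')
              congr 1
              exact Finset.sum_congr rfl fun j hj =>
                (Function.update_of_ne (ne_of_mem_of_not_mem hj haB) _ _).symm
            rw [hQ1, hQ2]
            exact Finset.mul_prod_erase π'.parts
              (fun B => (∑ j ∈ B, x'' j).descFactorial (B.card - 1)) hpa'
          · rw [if_neg h2, if_neg h2]
        have hchain :
            (∑ π ∈ univ.filter (fun π : Finpartition s => π.parts.card = k),
              if T ⊆ π.part a then
                  (x a).descFactorial T.card *
                    ((∑ j ∈ (π.part a).erase a, x j).descFactorial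
                        (((π.part a).erase a).card - T.card) *
                      ∏ B ∈ π.parts.erase (π.part a),
                        (∑ j ∈ B, x j).descFactorial (B.card - 1))
                else 0)
            = (x a).descFactorial T.card *
                ∑ π' ∈ univ.filter (fun π' : Finpartition (s \ T) => π'.parts.card = k),
                  ∏ B ∈ π'.parts, (∑ j ∈ B, x'' j).descFactorial (B.card - 1) := by
          calc (∑ π ∈ univ.filter (fun π : Finpartition s => π.parts.card = k),
              if T ⊆ π.part a then
                  (x a).descFactorial T.card *
                    ((∑ j ∈ (π.part a).erase a, x j).descFactorial
                        (((π.part a).erase a).card - T.card) *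
                      ∏ B ∈ π.parts.erase (π.part a),
                        (∑ j ∈ B, x j).descFactorial (B.card - 1))
                else 0)
              = ∑ π ∈ univ.filter (fun π : Finpartition s => T ⊆ π.part a),
                  (if π.parts.card = k then
                    (x a).descFactorial T.card *
                      ((∑ j ∈ (π.part a).erase a, x j).descFactorial
                          (((π.part a).erase a).card - T.card) *
                        ∏ B ∈ π.parts.erase (π.part a),
                          (∑ j ∈ B, x j).descFactorial (B.card - 1))
                  else 0) := by
                rw [Finset.sum_filter, Finset.sum_filter]
                refine Finset.sum_congr rfl fun π _ => ?_
                by_cases h1 : T ⊆ π.part a <;> by_cases h2 : π.parts.card = k <;>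
                  simp only [h1, h2, if_true, if_false, ite_true, ite_false]
            _ = ∑ π' ∈ (univ : Finset (Finpartition (s \ T))),
                  (if (glue' s T hTs a has haT π').parts.card = k then
                    (x a).descFactorial T.card *
                      ((∑ j ∈ ((glue' s T hTs a has haT π').part a).erase a, x j).descFactorial
                          ((((glue' s T hTs a has haT π').part a).erase a).card - T.card) *
                        ∏ B ∈ (glue' s T hTs a has haT π').parts.erase
                            ((glue' s T hTs a has haT π').part a),
                          (∑ j ∈ B, x j).descFactorial (B.card - 1))
                  else 0) := sum_glue' hTs has haT _
            _ = ∑ π' ∈ (univ : Finset (Finpartition (s \ T))),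
                  (if π'.parts.card = k then
                    (x a).descFactorial T.card *
                      ∏ B ∈ π'.parts, (∑ j ∈ B, x'' j).descFactorial (B.card - 1)
                  else 0) := Finset.sum_congr rfl fun π' _ => stepC π'
            _ = (x a).descFactorial T.card *
                ∑ π' ∈ univ.filter (fun π' : Finpartition (s \ T) => π'.parts.card = k),
                  ∏ B ∈ π'.parts, (∑ j ∈ B, x'' j).descFactorial (B.card - 1) := by
                rw [← Finset.sum_filter, ← Finset.mul_sum]
        rw [hchain]
        congr 1
        -- apply IH (or triviality when k is too large)
        have hcardsT : (s \ T).card = s.card - T.card := Finset.card_sdiff_of_subset hTs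
        have hYsum : ∑ j ∈ s \ T, x'' j = ∑ j ∈ s.erase a, x j := by
          rw [← Finset.add_sum_erase _ _ ha', hx'', Function.update_self]
          have hsd : (s \ T).erase a = (s.erase a) \ T := by
            ext y
            simp only [Finset.mem_erase, Finset.mem_sdiff]
            tauto
          rw [hsd]
          rw [Finset.sum_congr rfl (fun j hj =>
            Function.update_of_ne (Finset.ne_of_mem_erase (Finset.mem_sdiff.1 hj).1
              |> fun h => h) _ _)]
          · rw [Nat.add_comm, Finset.sum_sdiff hTe]
        by_cases hks : k ≤ (s \ T).card
        · have hμ' : (s \ T).card + ∑ j ∈ s \ T, x'' j ≤ μ := by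
            rw [hcardsT, hYsum]
            have hxsplit : ∑ j ∈ s, x j = x a + ∑ j ∈ s.erase a, x j :=
              (Finset.add_sum_erase _ _ has).symm
            omega
          rw [IH (s \ T) x'' k hk hks hμ', hcardsT, hYsum]
        · have hfe : (univ.filter (fun π' : Finpartition (s \ T) => π'.parts.card = k)) = ∅ := by
            apply Finset.filter_eq_empty_iff.2
            intro π' _
            have := π'.card_parts_le_card
            omega
          have hc0 : (s.card - T.card - 1).choose (k-1) = 0 := by
            apply Nat.choose_eq_zero_of_lt
            have h1 : 1 ≤ (s \ T).card := Finset.card_pos.2 ⟨a, ha'⟩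
            omega
          rw [hfe, Finset.sum_empty, hc0, Nat.zero_mul]
      rw [Finset.sum_congr rfl stepT]
      -- Step E : group subsets by cardinality and finish with `final_id`
      rw [Finset.sum_powerset]
      have stepE : ∀ l ∈ range ((s.erase a).card + 1),
          (∑ T ∈ Finset.powersetCard l (s.erase a),
            (x a).descFactorial T.card *
              ((s.card - T.card - 1).choose (k-1) *
                (∑ j ∈ s.erase a, x j).descFactorial (s.card - T.card - k)))
          = (s.card - 1).choose l *
              ((x a).descFactorial l *
                ((s.card - l - 1).choose (k-1) *
                  (∑ j ∈ s.erase a, x j).descFactorial (s.card - l - k))) := by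
        intro l hl
        have hc : ∀ T ∈ Finset.powersetCard l (s.erase a),
            (x a).descFactorial T.card *
              ((s.card - T.card - 1).choose (k-1) *
                (∑ j ∈ s.erase a, x j).descFactorial (s.card - T.card - k))
            = (x a).descFactorial l *
              ((s.card - l - 1).choose (k-1) *
                (∑ j ∈ s.erase a, x j).descFactorial (s.card - l - k)) := fun T hT => by
          rw [(Finset.mem_powersetCard.1 hT).2]
        rw [Finset.sum_congr rfl hc, Finset.sum_const, Finset.card_powersetCard, smul_eq_mul,
          Finset.card_erase_of_mem has]
      rw [Finset.sum_congr rfl stepE, Finset.card_erase_of_mem has,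
        final_id s.card k (x a) (∑ j ∈ s.erase a, x j) hk hkn,
        Finset.add_sum_erase _ _ has]

theorem stmt_9 (n k : ℕ) (hk : 1 ≤ k) (hkn : k ≤ n) (a : Fin n → ℕ) :
    ∑ p ∈ Finset.univ.filter
        (fun p : Finpartition (Finset.univ : Finset (Fin n)) => p.parts.card = k),
        (Nat.multinomial p.parts (fun b => (∑ j ∈ b, a j) + 1) *
          ∏ b ∈ p.parts, Nat.multinomial b (fun j => a j + 1)) =
      (n - 1).choose (k - 1) * Nat.multinomial Finset.univ (fun j => a j + 1) := by
  classical
  have hcard : (univ : Finset (Fin n)).card = n := by simp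
  set N := ∑ j : Fin n, a j with hN
  have hXval : ∑ j ∈ (univ : Finset (Fin n)), (a j + 1) = N + n := by
    rw [Finset.sum_add_distrib, Finset.sum_const, hcard, smul_eq_mul, Nat.mul_one]
  have key := main_count (ι := Fin n) ((univ : Finset (Fin n)).card + ∑ j : Fin n, (a j + 1))
    univ (fun j => a j + 1) k hk (by rw [hcard]; exact hkn) (le_refl _)
  rw [hcard, hXval] at key
  set C := ∏ j ∈ (univ : Finset (Fin n)), Nat.factorial (a j + 1) with hCdef
  have hC : 0 < C := Finset.prod_pos fun j _ => Nat.factorial_pos _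
  refine Nat.eq_of_mul_eq_mul_right hC ?_
  rw [Finset.sum_mul]
  have hterm : ∀ p ∈ Finset.univ.filter
      (fun p : Finpartition (Finset.univ : Finset (Fin n)) => p.parts.card = k),
      (Nat.multinomial p.parts (fun b => (∑ j ∈ b, a j) + 1) *
          ∏ b ∈ p.parts, Nat.multinomial b (fun j => a j + 1)) * C
        = (N + k).factorial * ∏ B ∈ p.parts, (∑ j ∈ B, (a j + 1)).descFactorial (B.card - 1) := by
    intro p hp
    have hpk : p.parts.card = k := (Finset.mem_filter.1 hp).2
    have hdisjp := p.supIndep.pairwiseDisjoint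
    have e2 : ∏ j ∈ p.parts.biUnion id, (a j + 1).factorial
        = ∏ j ∈ (univ : Finset (Fin n)), (a j + 1).factorial := by rw [p.biUnion_parts]
    have hCsplit : C = ∏ B ∈ p.parts, ∏ j ∈ B, (a j + 1).factorial := by
      rw [hCdef, ← e2]; exact Finset.prod_biUnion hdisjp
    have e3 : ∑ j ∈ p.parts.biUnion id, a j = ∑ j ∈ (univ : Finset (Fin n)), a j := by
      rw [p.biUnion_parts]
    have hNsplit : ∑ B ∈ p.parts, ∑ j ∈ B, a j = N := by
      rw [hN, ← e3]; exact (Finset.sum_biUnion hdisjp).symm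
    have hinner : ∀ B ∈ p.parts,
        Nat.multinomial B (fun j => a j + 1) * ∏ j ∈ B, (a j + 1).factorial
          = ((∑ j ∈ B, a j) + B.card).descFactorial (B.card - 1) * ((∑ j ∈ B, a j) + 1).factorial := by
      intro B hB
      have hB1 : 1 ≤ B.card := Finset.card_pos.2 (p.nonempty_of_mem_parts hB)
      have hs : ∑ j ∈ B, (a j + 1) = (∑ j ∈ B, a j) + B.card := by
        rw [Finset.sum_add_distrib, Finset.sum_const, smul_eq_mul, Nat.mul_one]
      rw [Nat.mul_comm, Nat.multinomial_spec, hs]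
      rw [← Nat.factorial_mul_descFactorial
        (show B.card - 1 ≤ (∑ j ∈ B, a j) + B.card by omega)]
      rw [show (∑ j ∈ B, a j) + B.card - (B.card - 1) = (∑ j ∈ B, a j) + 1 by omega]
      exact Nat.mul_comm _ _
    calc (Nat.multinomial p.parts (fun b => (∑ j ∈ b, a j) + 1) *
          ∏ b ∈ p.parts, Nat.multinomial b (fun j => a j + 1)) * C
        = Nat.multinomial p.parts (fun b => (∑ j ∈ b, a j) + 1) *
            ∏ B ∈ p.parts, (Nat.multinomial B (fun j => a j + 1) * ∏ j ∈ B, (a j + 1).factorial) := by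
          rw [Finset.prod_mul_distrib, hCsplit, Nat.mul_assoc]
      _ = Nat.multinomial p.parts (fun b => (∑ j ∈ b, a j) + 1) *
            ∏ B ∈ p.parts, (((∑ j ∈ B, a j) + B.card).descFactorial (B.card - 1) *
              ((∑ j ∈ B, a j) + 1).factorial) := by
          rw [Finset.prod_congr rfl hinner]
      _ = (∏ B ∈ p.parts, ((∑ j ∈ B, a j) + 1).factorial) *
            Nat.multinomial p.parts (fun b => (∑ j ∈ b, a j) + 1) *
            ∏ B ∈ p.parts, ((∑ j ∈ B, a j) + B.card).descFactorial (B.card - 1) := by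
          rw [Finset.prod_mul_distrib]; ring
      _ = (∑ B ∈ p.parts, ((∑ j ∈ B, a j) + 1)).factorial *
            ∏ B ∈ p.parts, ((∑ j ∈ B, a j) + B.card).descFactorial (B.card - 1) := by
          rw [Nat.multinomial_spec]
      _ = (N + k).factorial * ∏ B ∈ p.parts, (∑ j ∈ B, (a j + 1)).descFactorial (B.card - 1) := by
          congr 1
          · congr 1
            rw [Finset.sum_add_distrib, Finset.sum_const, smul_eq_mul, Nat.mul_one,
              hNsplit, hpk]
          · refine Finset.prod_congr rfl fun B hB => ?_
            congr 1
            rw [Finset.sum_add_distrib, Finset.sum_const, smul_eq_mul, Nat.mul_one]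
  rw [Finset.sum_congr rfl hterm, ← Finset.mul_sum, key]
  have hfac : (N + k).factorial * (N + n).descFactorial (n - k) = (N + n).factorial := by
    rw [← Nat.factorial_mul_descFactorial (show n - k ≤ N + n by omega)]
    congr 2
    omega
  have hmult : Nat.multinomial (univ : Finset (Fin n)) (fun j => a j + 1) * C = (N + n).factorial := by
    rw [Nat.mul_comm, Nat.multinomial_spec, hXval]
  calc (N + k).factorial * ((n-1).choose (k-1) * (N + n).descFactorial (n - k))
      = (n-1).choose (k-1) * ((N + k).factorial * (N + n).descFactorial (n - k)) := by ring
    _ = (n-1).choose (k-1) * (N + n).factorial := by rw [hfac]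
    _ = (n-1).choose (k-1) * (Nat.multinomial (univ : Finset (Fin n)) (fun j => a j + 1) * C) := by
        rw [hmult]
    _ = (n-1).choose (k-1) * Nat.multinomial (univ : Finset (Fin n)) (fun j => a j + 1) * C := by
        ring
end
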